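/- arXiv:0711.4491 — 7 statements merged into one kernel-verified Lean document; each statement's English description precedes it below -/
import Mathlib

section
/- Let η be a real-valued random variable with E η < 0, and let h : ℝ → ℝ be a non-decreasing function that is concave on some interval [x_0, ∞), satisfies h(x) = o(x) as x → ∞, and h(x) ≥ ln x for all sufficiently large x. If E e^{h(η)} < ∞, then there exists x_1 such that E e^{h(x+η)} ≤ e^{h(x)} for all x > x_1. -/
/-!
For large `x` let `s` be a supergradient of `h` at `x` on its interval of concavity. Since
`h = o(x)` we get `s → 0`, and testing the tangent line against `h ≥ log` gives `s > 0` and,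
at `u = 1/s`, `s x - h x ≤ 1 + log s`. This yields `e^{h(x+t) - h(x)} ≤ 1 + s G(t)` for a function
`G` that does not depend on `x`: for `t` very negative by monotonicity, for `|s t| ≤ ε` by the
tangent line and `e^u ≤ 1 + u + u²`, and for `s t ≥ ε` by concavity, which bounds
`h(x+t) - h(x)` by `log s + h t + 1 - log ε`. As `E η < 0`, a small `ε` and far cut-offs give
`E G(η) ≤ 0`, hence `E e^{h(x+η)} ≤ e^{h x} (1 + s E G(η)) ≤ e^{h x}`.
-/

open MeasureTheory ProbabilityTheory Filter Real Set
open scoped ENNReal Topology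

def IsSupergradientOn (S : Set ℝ) (f : ℝ → ℝ) (x s : ℝ) : Prop :=
  ∀ u ∈ S, f u ≤ f x + s * (u - x)

lemma ConvexOn.exists_add_mul_sub_le_of_mem_interior {S : Set ℝ} {f : ℝ → ℝ}
    (hf : ConvexOn ℝ S f) {x : ℝ} (hx : x ∈ interior S) :
    ∃ d, ∀ u ∈ S, f x + d * (u - x) ≤ f u := by
  refine ⟨derivWithin f (Ioi x) x, fun u hu => ?_⟩
  rcases lt_trichotomy u x with hux | rfl | hxu
  · have := (hf.slope_le_leftDeriv_of_mem_interior hu hx hux).trans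
      (hf.leftDeriv_le_rightDeriv_of_mem_interior hx)
    rw [slope_def_field, div_le_iff₀ (sub_pos.2 hux)] at this
    linarith
  · simp
  · have := hf.rightDeriv_le_slope_of_mem_interior hx hu hxu
    rw [slope_def_field, le_div_iff₀ (sub_pos.2 hxu)] at this
    linarith

lemma ConcaveOn.exists_isSupergradientOn {S : Set ℝ} {f : ℝ → ℝ} (hf : ConcaveOn ℝ S f)
    {x : ℝ} (hx : x ∈ interior S) : ∃ s, IsSupergradientOn S f x s := by
  obtain ⟨d, hd⟩ := hf.neg.exists_add_mul_sub_le_of_mem_interior hx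
  exact ⟨-d, fun u hu => by have := hd u hu; simp only [Pi.neg_apply] at this; linarith⟩

lemma ConcaveOn.sub_le_mul_sub_of_isSupergradientOn {S : Set ℝ} {f : ℝ → ℝ}
    (hf : ConcaveOn ℝ S f) {x s t w : ℝ} (hs : IsSupergradientOn S f x s) (hx : x ∈ S)
    (hw : w ∈ S) (hxt : x ≤ t) (htw : t ≤ w) : f w - f t ≤ s * (w - t) := by
  rcases htw.eq_or_lt with rfl | htw
  · simp
  rcases hxt.eq_or_lt with rfl | hxt
  · linarith [hs w hw]
  have ht : t ∈ S := hf.1.ordConnected.out hx hw ⟨hxt.le, htw.le⟩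
  have hslope : (f t - f x) / (t - x) ≤ s := by
    rw [div_le_iff₀ (sub_pos.2 hxt)]; linarith [hs t ht]
  exact (div_le_iff₀ (sub_pos.2 htw)).1 ((hf.slope_anti_adjacent hx hw hxt htw).trans hslope)

/-- Bounds `(exp (h (x + t) - h x) - 1) / s` for a supergradient `s` at a large `x`: on `t ≤ b`
the term `|t|` makes it nonnegative, `ε * |t|` absorbs the quadratic Taylor term where
`|s t| ≤ ε`, and `exp 1 / ε * exp (h t)` covers `s t ≥ ε`. -/
noncomputable def expIncrementMajorant (h : ℝ → ℝ) (ε b M t : ℝ) : ℝ :=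
  t + ε * |t| + (Iic b).indicator (fun t => |t|) t
    + (Ici M).indicator (fun t => exp 1 / ε * exp (h t)) t

namespace IsSupergradientOn

variable {h : ℝ → ℝ} {q x s : ℝ}

lemma pos (hs : IsSupergradientOn (Ici q) h x s) (hlog : ∀ u ∈ Ici q, log u ≤ h u) :
    0 < s := by
  by_contra! hs0
  set u := max q (max x (exp (h x + 1)))
  have hqu : q ≤ u := le_max_left _ _
  have hxu : x ≤ u := (le_max_left _ _).trans (le_max_right _ _)
  have hlogu : h x + 1 ≤ log u := by
    rw [← log_exp (h x + 1)]
    exact log_le_log (exp_pos _) ((le_max_right _ _).trans (le_max_right _ _))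
  nlinarith [hlog u hqu, hs u hqu, mul_nonpos_of_nonpos_of_nonneg hs0 (sub_nonneg.2 hxu)]

lemma mul_sub_le_one_add_log (hs : IsSupergradientOn (Ici q) h x s)
    (hlog : ∀ u ∈ Ici q, log u ≤ h u) (hs0 : 0 < s) (hsq : q ≤ s⁻¹) :
    s * x - h x ≤ 1 + log s := by
  have hlog' := hlog s⁻¹ hsq
  have htan := hs s⁻¹ hsq
  rw [log_inv] at hlog'
  rw [mul_sub, mul_inv_cancel₀ hs0.ne'] at htan
  linarith

lemma le_add_log_add (hs : IsSupergradientOn (Ici q) h x s) (hcon : ConcaveOn ℝ (Ici q) h)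
    (hlog : ∀ u ∈ Ici q, log u ≤ h u) (hs0 : 0 < s) {ε t : ℝ} (hε : 0 < ε)
    (hε1 : ε ≤ 1) (hqε : q ≤ ε / s) (hx : 0 ≤ x) (hqx : q ≤ x) (ht : ε / s ≤ t) :
    h (x + t) ≤ h x + log s + h t + (1 - log ε) := by
  have hsq : q ≤ s⁻¹ :=
    hqε.trans (by rw [div_eq_mul_inv]; exact mul_le_of_le_one_left (inv_nonneg.2 hs0.le) hε1)
  have hx_bound := hs.mul_sub_le_one_add_log hlog hs0 hsq
  have hlogε : log ε ≤ 0 := log_nonpos hε.le hε1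
  rcases le_total t x with htx | hxt
  · -- `u ↦ s * u - h u` is convex, hence bounded on `[ε / s, x]` by its values at the endpoints
    have hconv : ConvexOn ℝ (Ici q) (fun u => s * u - h u) :=
      ((convexOn_id (convex_Ici q)).smul hs0.le).sub hcon
    have hmax := hconv.le_max_of_mem_Icc hqε hqx ⟨ht, htx⟩
    have hleft : s * (ε / s) - h (ε / s) ≤ ε - log ε + log s := by
      have := hlog (ε / s) hqε
      rw [log_div hε.ne' hs0.ne'] at this
      rw [mul_div_cancel₀ _ hs0.ne']
      linarith
    have htan := hs (x + t) (mem_Ici.2 (by linarith [div_pos hε hs0]))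
    rw [add_sub_cancel_left] at htan
    have hφt : s * t - h t ≤ log s + (1 - log ε) :=
      hmax.trans (max_le (by linarith) (by linarith))
    linarith
  · have := hcon.sub_le_mul_sub_of_isSupergradientOn hs hqx (w := t + x)
      (mem_Ici.2 (by linarith)) hxt (by linarith)
    rw [add_sub_cancel_left, add_comm t x] at this
    linarith

lemma exp_le_exp_mul_one_add_majorant (hs : IsSupergradientOn (Ici q) h x s)
    (hmono : Monotone h) (hcon : ConcaveOn ℝ (Ici q) h) (hlog : ∀ u ∈ Ici q, log u ≤ h u)
    (hs0 : 0 < s) {ε b M : ℝ} (hε : 0 < ε) (hε1 : ε ≤ 1) (hq : 0 ≤ q) (hb : b ≤ 0)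
    (hqb : q ≤ x + b) (hsb : s * -b ≤ ε) (hqM : q ≤ M) (hsM : s * M ≤ ε) (t : ℝ) :
    exp (h (x + t)) ≤ exp (h x) * (1 + s * expIncrementMajorant h ε b M t) := by
  have hlow : 0 ≤ (Iic b).indicator (fun t => |t|) t :=
    indicator_nonneg (fun _ _ => abs_nonneg _) _
  have hhigh : 0 ≤ (Ici M).indicator (fun t => exp 1 / ε * exp (h t)) t :=
    indicator_nonneg (fun _ _ => by positivity) _
  have hexp := exp_pos (h x)
  rcases le_or_gt t b with htb | hbt
  · have hG : 0 ≤ expIncrementMajorant h ε b M t := by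
      rw [expIncrementMajorant, indicator_of_mem (mem_Iic.2 htb)]
      nlinarith [neg_abs_le t, abs_nonneg t]
    calc exp (h (x + t)) ≤ exp (h x) := exp_le_exp.2 (hmono (by linarith))
      _ ≤ _ := le_mul_of_one_le_right hexp.le (by nlinarith [mul_nonneg hs0.le hG])
  rcases lt_or_ge t (ε / s) with htε | hεt
  · have hst : |s * t| ≤ ε := by
      have := (lt_div_iff₀ hs0).1 htε
      rw [abs_le]
      constructor <;> nlinarith
    have htan := hs (x + t) (mem_Ici.2 (by linarith))
    rw [add_sub_cancel_left] at htan
    have hquad : exp (s * t) ≤ 1 + s * t + (s * t) ^ 2 := by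
      have := abs_exp_sub_one_sub_id_le (hst.trans hε1)
      linarith [le_abs_self (exp (s * t) - 1 - s * t)]
    have hsq : (s * t) ^ 2 ≤ s * (ε * |t|) := by
      have hst' : s * |t| ≤ ε := by rwa [abs_mul, abs_of_pos hs0] at hst
      have e : (s * t) ^ 2 = (s * |t|) * (s * |t|) := by rw [← sq, mul_pow, mul_pow, sq_abs]
      rw [e, mul_left_comm s ε]
      exact mul_le_mul_of_nonneg_right hst' (mul_nonneg hs0.le (abs_nonneg t))
    calc exp (h (x + t)) ≤ exp (h x + s * t) := exp_le_exp.2 htan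
      _ = exp (h x) * exp (s * t) := exp_add _ _
      _ ≤ exp (h x) * (1 + s * expIncrementMajorant h ε b M t) := by
        gcongr
        rw [expIncrementMajorant]
        nlinarith [mul_nonneg hs0.le hlow, mul_nonneg hs0.le hhigh]
  · have hMε : M ≤ ε / s := (le_div_iff₀ hs0).2 (by linarith)
    have ht0 : 0 ≤ t := (div_pos hε hs0).le.trans hεt
    have hbound := hs.le_add_log_add hcon hlog hs0 hε hε1 (hqM.trans hMε) (by linarith)
      (by linarith) hεt
    calc exp (h (x + t)) ≤ exp (h x + log s + h t + (1 - log ε)) := exp_le_exp.2 hbound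
      _ = exp (h x) * (s * (exp 1 / ε * exp (h t))) := by
        rw [exp_add, exp_add, exp_add, exp_log hs0, exp_sub, exp_log hε]
        ring
      _ ≤ exp (h x) * (1 + s * expIncrementMajorant h ε b M t) := by
        gcongr
        rw [expIncrementMajorant, indicator_of_mem (mem_Ici.2 (hMε.trans hεt)),
          abs_of_nonneg ht0]
        nlinarith [mul_nonneg hs0.le hlow, mul_nonneg hs0.le ht0]

end IsSupergradientOn

lemma eventually_exists_isSupergradientOn_le {h : ℝ → ℝ} {q : ℝ}
    (hcon : ConcaveOn ℝ (Ici q) h) (hlittleo : h =o[atTop] fun x => x)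
    (hlog : ∀ u ∈ Ici q, log u ≤ h u) {ρ : ℝ} (hρ : 0 < ρ) :
    ∀ᶠ x in atTop, ∃ s, 0 < s ∧ s ≤ ρ ∧ IsSupergradientOn (Ici q) h x s := by
  have hsmall : ∀ᶠ x in atTop, h x ≤ ρ / 2 * x := by
    filter_upwards [hlittleo.def (half_pos hρ), eventually_ge_atTop 0] with x hx hx0
    rw [norm_eq_abs, norm_eq_abs, abs_of_nonneg hx0] at hx
    exact (le_abs_self _).trans hx
  have hlarge : ∀ᶠ x in atTop, ρ * q - h q ≤ ρ / 2 * x :=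
    (tendsto_id.const_mul_atTop (half_pos hρ)).eventually_ge_atTop _
  filter_upwards [hsmall, hlarge, eventually_gt_atTop q] with x hsmall hlarge hqx
  obtain ⟨s, hs⟩ := hcon.exists_isSupergradientOn (by rwa [interior_Ici])
  refine ⟨s, hs.pos hlog, ?_, hs⟩
  have := hs q (mem_Ici.2 le_rfl)
  exact (mul_le_mul_iff_of_pos_right (sub_pos.2 hqx)).1 (by linarith)

section Law

variable {μ : Measure ℝ} {h : ℝ → ℝ}

lemma tendsto_setIntegral_Ici_atTop [IsFiniteMeasure μ] {f : ℝ → ℝ} (hf : Integrable f μ) :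
    Tendsto (fun M => ∫ t in Ici M, f t ∂μ) atTop (𝓝 0) := by
  refine hf.tendsto_setIntegral_nhds_zero ?_
  have hempty : ⋂ M : ℝ, Ici M = ∅ :=
    eq_empty_of_forall_notMem fun t ht => (lt_add_one t).not_ge (mem_iInter.1 ht (t + 1))
  simpa [hempty] using tendsto_measure_iInter_atTop (μ := μ)
    (fun M => measurableSet_Ici.nullMeasurableSet) antitone_Ici ⟨0, measure_ne_top _ _⟩

lemma tendsto_setIntegral_Iic_atBot [IsFiniteMeasure μ] {f : ℝ → ℝ} (hf : Integrable f μ) :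
    Tendsto (fun b => ∫ t in Iic b, f t ∂μ) atBot (𝓝 0) := by
  refine hf.tendsto_setIntegral_nhds_zero ?_
  have hempty : ⋂ b : ℝ, Iic b = ∅ :=
    eq_empty_of_forall_notMem fun t ht => (sub_one_lt t).not_ge (mem_iInter.1 ht (t - 1))
  simpa [hempty] using tendsto_measure_iInter_atBot (μ := μ)
    (fun b => measurableSet_Iic.nullMeasurableSet) monotone_Iic ⟨0, measure_ne_top _ _⟩

lemma integrable_expIncrementMajorant (hid : Integrable id μ)
    (hexp : Integrable (fun t => exp (h t)) μ) (ε b M : ℝ) :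
    Integrable (expIncrementMajorant h ε b M) μ :=
  ((hid.add (hid.abs.const_mul ε)).add (hid.abs.indicator measurableSet_Iic)).add
    ((hexp.const_mul _).indicator measurableSet_Ici)

lemma integral_expIncrementMajorant (hid : Integrable id μ)
    (hexp : Integrable (fun t => exp (h t)) μ) (ε b M : ℝ) :
    ∫ t, expIncrementMajorant h ε b M t ∂μ = ∫ t, t ∂μ + ε * ∫ t, |t| ∂μ
      + ∫ t in Iic b, |t| ∂μ + exp 1 / ε * ∫ t in Ici M, exp (h t) ∂μ := by
  have hid' : Integrable (fun t => t) μ := hid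
  have habs : Integrable (fun t => |t|) μ := hid.abs
  have hlin : Integrable (fun t => t + ε * |t|) μ := hid'.add (habs.const_mul ε)
  have hlow : Integrable ((Iic b).indicator fun t => |t|) μ :=
    habs.indicator measurableSet_Iic
  have hhigh : Integrable ((Ici M).indicator fun t => exp 1 / ε * exp (h t)) μ :=
    (hexp.const_mul _).indicator measurableSet_Ici
  have hlinlow : Integrable (fun t => t + ε * |t| + (Iic b).indicator (fun t => |t|) t) μ :=
    hlin.add hlow
  simp only [expIncrementMajorant]
  rw [integral_add hlinlow hhigh, integral_add hlin hlow, integral_add hid' (habs.const_mul ε),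
    integral_const_mul, integral_indicator measurableSet_Iic,
    integral_indicator measurableSet_Ici, integral_const_mul]

lemma exists_integral_expIncrementMajorant_nonpos [IsFiniteMeasure μ] (hid : Integrable id μ)
    (hmean : ∫ t, t ∂μ < 0) (hexp : Integrable (fun t => exp (h t)) μ) (q : ℝ) :
    ∃ ε b M, 0 < ε ∧ ε ≤ 1 ∧ b ≤ 0 ∧ q ≤ M ∧
      ∫ t, expIncrementMajorant h ε b M t ∂μ ≤ 0 := by
  set m := ∫ t, t ∂μ
  set I := ∫ t, |t| ∂μ
  have hI : 0 ≤ I := integral_nonneg fun t => abs_nonneg t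
  have hm3 : 0 < -m / 3 := by linarith
  set ε := min 1 (-m / 3 / (I + 1))
  have hε : 0 < ε := lt_min one_pos (div_pos hm3 (by linarith))
  have hεI : ε * I ≤ -m / 3 := by
    have : ε * (I + 1) ≤ -m / 3 := (le_div_iff₀ (by linarith)).1 (min_le_right _ _)
    nlinarith
  have habs : Integrable (fun t => |t|) μ := hid.abs
  obtain ⟨b, hb, hb0⟩ := (((tendsto_setIntegral_Iic_atBot habs).eventually
    (eventually_le_nhds hm3)).and (eventually_le_atBot 0)).exists
  have hhigh : Tendsto (fun M => exp 1 / ε * ∫ t in Ici M, exp (h t) ∂μ) atTop (𝓝 0) := by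
    simpa using (tendsto_setIntegral_Ici_atTop hexp).const_mul (exp 1 / ε)
  obtain ⟨M, hM, hqM⟩ :=
    ((hhigh.eventually (eventually_le_nhds hm3)).and (eventually_ge_atTop q)).exists
  refine ⟨ε, b, M, hε, min_le_left _ _, hb0, hqM, ?_⟩
  rw [integral_expIncrementMajorant hid hexp]
  linarith

theorem eventually_lintegral_exp_add_le [IsProbabilityMeasure μ] {q : ℝ}
    (hid : Integrable id μ) (hmean : ∫ t, t ∂μ < 0) (hmono : Monotone h) (hq : 0 < q)
    (hcon : ConcaveOn ℝ (Ici q) h) (hlittleo : h =o[atTop] fun x => x)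
    (hlog : ∀ u ∈ Ici q, log u ≤ h u) (hexp : Integrable (fun t => exp (h t)) μ) :
    ∀ᶠ x in atTop,
      ∫⁻ t, ENNReal.ofReal (exp (h (x + t))) ∂μ ≤ ENNReal.ofReal (exp (h x)) := by
  obtain ⟨ε, b, M, hε, hε1, hb, hqM, hG⟩ :=
    exists_integral_expIncrementMajorant_nonpos hid hmean hexp q
  have hMb : 0 < M - b := by linarith
  filter_upwards [eventually_exists_isSupergradientOn_le hcon hlittleo hlog (div_pos hε hMb),
    eventually_ge_atTop (q - b)] with x ⟨s, hs0, hsρ, hs⟩ hx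
  have hsMb : s * (M - b) ≤ ε := (le_div_iff₀ hMb).1 hsρ
  have hbound := hs.exp_le_exp_mul_one_add_majorant hmono hcon hlog hs0 hε hε1 hq.le hb
    (by linarith) (by nlinarith) hqM (by nlinarith)
  have hGint := (integrable_expIncrementMajorant hid hexp ε b M).const_mul s
  have hint : Integrable (fun t => exp (h x) * (1 + s * expIncrementMajorant h ε b M t)) μ :=
    ((integrable_const 1).add hGint).const_mul _
  calc ∫⁻ t, ENNReal.ofReal (exp (h (x + t))) ∂μ
      ≤ ∫⁻ t, ENNReal.ofReal (exp (h x) * (1 + s * expIncrementMajorant h ε b M t)) ∂μ :=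
        lintegral_mono fun t => ENNReal.ofReal_le_ofReal (hbound t)
    _ = ENNReal.ofReal (∫ t, exp (h x) * (1 + s * expIncrementMajorant h ε b M t) ∂μ) :=
        (ofReal_integral_eq_lintegral_ofReal hint
          (Eventually.of_forall fun t => (exp_pos _).le.trans (hbound t))).symm
    _ ≤ ENNReal.ofReal (exp (h x)) := by
        gcongr
        rw [integral_const_mul, integral_add (integrable_const 1) hGint, integral_const_mul]
        simp only [integral_const, probReal_univ, one_smul]
        exact mul_le_of_le_one_right (exp_pos _).le
          (by linarith [mul_nonpos_of_nonneg_of_nonpos hs0.le hG])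

end Law

/-- **Lemma 4.** Let `η` have negative mean and `h : ℝ → ℝ` be non-decreasing, eventually
concave, `h(x) = o(x)`, `h(x) ≥ ln x` eventually, and `E e^{h(η)} < ∞`. Then there is `x₁`
such that `E e^{h(x+η)} ≤ e^{h(x)}` for all `x > x₁`. -/
theorem exp_moment_shift_decreasing
    {Ω : Type*} [MeasurableSpace Ω] (P : Measure Ω) [IsProbabilityMeasure P]
    (η : Ω → ℝ) (hηmeas : Measurable η)
    (hηint : Integrable η P) (hηmean : ∫ ω, η ω ∂P < 0)
    (h : ℝ → ℝ) (hmono : Monotone h)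
    (hconc : ∃ x₀ : ℝ, ConcaveOn ℝ (Set.Ici x₀) h)
    (hlittleo : h =o[atTop] (fun x : ℝ => x))
    (hlog : ∀ᶠ x in atTop, Real.log x ≤ h x)
    (hfin : ∫⁻ ω, ENNReal.ofReal (Real.exp (h (η ω))) ∂P < ∞) :
    ∃ x₁ : ℝ, ∀ x : ℝ, x₁ < x →
      ∫⁻ ω, ENNReal.ofReal (Real.exp (h (x + η ω))) ∂P
        ≤ ENNReal.ofReal (Real.exp (h x)) := by
  obtain ⟨x₀, hconc⟩ := hconc
  obtain ⟨L, hL⟩ := eventually_atTop.1 hlog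
  set q := max 1 (max x₀ L)
  have hmeas (x : ℝ) : Measurable fun t => ENNReal.ofReal (exp (h (x + t))) :=
    (measurable_exp.comp (hmono.measurable.comp (measurable_const_add x))).ennreal_ofReal
  have := Measure.isProbabilityMeasure_map (μ := P) hηmeas.aemeasurable
  have hid : Integrable id (P.map η) :=
    (integrable_map_measure aestronglyMeasurable_id hηmeas.aemeasurable).2 hηint
  have hmean : ∫ t, t ∂(P.map η) < 0 := by
    rwa [integral_map (f := fun t => t) hηmeas.aemeasurable measurable_id'.aestronglyMeasurable]
  have hexp : Integrable (fun t => exp (h t)) (P.map η) := by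
    refine ⟨(measurable_exp.comp hmono.measurable).aestronglyMeasurable, ?_⟩
    rw [hasFiniteIntegral_iff_ofReal (Eventually.of_forall fun t => (exp_pos _).le),
      lintegral_map (by simpa using hmeas 0) hηmeas]
    exact hfin
  obtain ⟨x₁, hx₁⟩ := eventually_atTop.1 (eventually_lintegral_exp_add_le hid hmean hmono
    (lt_max_of_lt_left one_pos : 0 < q)
    (hconc.subset (Ici_subset_Ici.2 ((le_max_left _ _).trans (le_max_right _ _))) (convex_Ici q))
    hlittleo (fun u hu => hL u (((le_max_right _ _).trans (le_max_right _ _)).trans hu)) hexp)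
  refine ⟨x₁, fun x hx => ?_⟩
  simpa only [lintegral_map (hmeas x) hηmeas] using hx₁ x hx.le
end

section
/- Let χ ≥ 0 be any random variable. Then there exists a differentiable concave function g : [0,∞) → [0,∞) with g(0) = 0, g'(x) ≤ 1 for all x, g(x) → ∞ as x → ∞, and E e^{g(χ)} < ∞. -/
open MeasureTheory ProbabilityTheory Filter Real Set
open scoped ENNReal Topology

/-!
Take `g x = ∫₀ˣ u` with a continuous antitone slope `0 < u ≤ 1`; then `g` is concave,
differentiable and `1`-Lipschitz. Cut `ℕ` into blocks `[b k, b (k + 1))` with `b (k + 1) ≥ 2 b k`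
and give the slope the value `1 / b (k + 1)` on the `k`-th block; averaging this step function
over windows of length one makes it continuous without moving it by more than one step.
Each block raises `g` by between `1 / 2` and `1`, so `g → ∞` while `g (b k) ≤ k + 1`. Choosing
`b k` beyond the point where `P (χ > b k) ≤ e^{-2(k+1)}` gives `P (g χ > k) ≤ e^{-2k}`, and this
exponential tail makes `E e^{g χ}` finite.
-/

noncomputable def unitAverage (v : ℝ → ℝ) (t : ℝ) : ℝ := ∫ s in t..t + 1, v s

theorem unitAverage_eq_integral_comp_add (v : ℝ → ℝ) (t : ℝ) :
    unitAverage v t = ∫ s in (0 : ℝ)..1, v (s + t) := by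
  rw [intervalIntegral.integral_comp_add_right, zero_add, add_comm, unitAverage]

namespace Antitone

variable {v : ℝ → ℝ}

theorem continuous_unitAverage (hv : Antitone v) : Continuous (unitAverage v) := by
  have hprim := intervalIntegral.continuous_primitive (μ := volume)
    (fun _ _ => hv.intervalIntegrable) 0
  have hdiff : unitAverage v = fun t => (∫ s in 0..t + 1, v s) - ∫ s in 0..t, v s :=
    funext fun t => (intervalIntegral.integral_interval_sub_left hv.intervalIntegrable
      hv.intervalIntegrable).symm
  rw [hdiff]
  exact (hprim.comp (continuous_add_const 1)).sub hprim

theorem antitone_unitAverage (hv : Antitone v) : Antitone (unitAverage v) := fun s t hst => by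
  rw [unitAverage_eq_integral_comp_add, unitAverage_eq_integral_comp_add]
  exact intervalIntegral.integral_mono_on zero_le_one
    (hv.comp_monotone (monotone_id.add_const t)).intervalIntegrable
    (hv.comp_monotone (monotone_id.add_const s)).intervalIntegrable fun x _ => hv (by linarith)

theorem unitAverage_le (hv : Antitone v) (t : ℝ) : unitAverage v t ≤ v t := by
  calc unitAverage v t ≤ ∫ _ in t..t + 1, v t :=
        intervalIntegral.integral_mono_on (by linarith) hv.intervalIntegrable
          intervalIntegrable_const fun x hx => hv hx.1
    _ = v t := by simp

theorem le_unitAverage (hv : Antitone v) (t : ℝ) : v (t + 1) ≤ unitAverage v t := by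
  calc v (t + 1) = ∫ _ in t..t + 1, v (t + 1) := by simp
    _ ≤ unitAverage v t :=
        intervalIntegral.integral_mono_on (by linarith) intervalIntegrable_const
          hv.intervalIntegrable fun x hx => hv hx.2

end Antitone

noncomputable def concaveProfile (D : ℕ → ℝ) (x : ℝ) : ℝ :=
  ∫ t in (0 : ℝ)..x, unitAverage (D ∘ Nat.floor) t

namespace concaveProfile

variable {D : ℕ → ℝ}

theorem antitone_step (hD : Antitone D) : Antitone (D ∘ (Nat.floor : ℝ → ℕ)) :=
  hD.comp_monotone Nat.floor_mono

theorem hasDerivAt (hD : Antitone D) (x : ℝ) :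
    HasDerivAt (concaveProfile D) (unitAverage (D ∘ Nat.floor) x) x :=
  ((antitone_step hD).continuous_unitAverage.integral_hasStrictDerivAt
    0 x).hasDerivAt

theorem differentiable (hD : Antitone D) : Differentiable ℝ (concaveProfile D) :=
  fun x => (hasDerivAt hD x).differentiableAt

theorem deriv_eq (hD : Antitone D) : deriv (concaveProfile D) = unitAverage (D ∘ Nat.floor) :=
  funext fun x => (hasDerivAt hD x).deriv

@[simp] theorem zero (D : ℕ → ℝ) : concaveProfile D 0 = 0 := intervalIntegral.integral_same

theorem concaveOn (hD : Antitone D) : ConcaveOn ℝ univ (concaveProfile D) :=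
  Antitone.concaveOn_univ_of_deriv (differentiable hD)
    (deriv_eq hD ▸ (antitone_step hD).antitone_unitAverage)

theorem monotone (hD : Antitone D) (hD0 : ∀ i, 0 ≤ D i) : Monotone (concaveProfile D) :=
  monotone_of_deriv_nonneg (differentiable hD) fun x => by
    rw [deriv_eq hD]
    exact le_trans (hD0 _) ((antitone_step hD).le_unitAverage x)

theorem derivWithin_Ici_le (hD : Antitone D) (hD1 : ∀ i, D i ≤ 1) {x : ℝ} (hx : 0 ≤ x) :
    derivWithin (concaveProfile D) (Ici 0) x ≤ 1 := by
  rw [(hasDerivAt hD x).hasDerivWithinAt.derivWithin (uniqueDiffOn_Ici 0 x hx)]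
  exact ((antitone_step hD).unitAverage_le x).trans (hD1 _)

theorem le_sum_range (hD : Antitone D) (n : ℕ) :
    concaveProfile D n ≤ ∑ i ∈ Finset.range n, D i := by
  have hu := (antitone_step hD).antitone_unitAverage
  calc concaveProfile D n ≤ ∑ i ∈ Finset.range n, unitAverage (D ∘ Nat.floor) i := by
        simpa [concaveProfile] using (hu.antitoneOn _).integral_le_sum (x₀ := 0) (a := n)
    _ ≤ ∑ i ∈ Finset.range n, D i := Finset.sum_le_sum fun i _ => by
        simpa using (antitone_step hD).unitAverage_le (i : ℝ)

theorem sum_range_le (hD : Antitone D) (n : ℕ) :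
    ∑ i ∈ Finset.range n, D (i + 2) ≤ concaveProfile D n := by
  have hu := (antitone_step hD).antitone_unitAverage
  calc ∑ i ∈ Finset.range n, D (i + 2)
      ≤ ∑ i ∈ Finset.range n, unitAverage (D ∘ Nat.floor) (i + 1) :=
        Finset.sum_le_sum fun i _ => by
          have h := (antitone_step hD).le_unitAverage ((i + 1 : ℕ) : ℝ)
          rwa [← Nat.cast_add_one, Function.comp_apply, Nat.floor_natCast, Nat.cast_add_one] at h
    _ ≤ concaveProfile D n := by
        simpa [concaveProfile] using (hu.antitoneOn _).sum_le_integral (x₀ := 0) (a := n)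

theorem tendsto_atTop (hD : Antitone D) (hD0 : ∀ i, 0 ≤ D i) (hDs : ¬ Summable D) :
    Tendsto (concaveProfile D) atTop atTop := by
  have hsum : Tendsto (fun n => ∑ i ∈ Finset.range n, D (i + 2)) atTop atTop :=
    (not_summable_iff_tendsto_nat_atTop_of_nonneg fun i => hD0 _).1
      (by rwa [summable_nat_add_iff])
  refine (monotone hD hD0).tendsto_atTop_atTop fun b => ?_
  obtain ⟨n, hn⟩ := (hsum.eventually_ge_atTop b).exists
  exact ⟨n, hn.trans (sum_range_le hD n)⟩

end concaveProfile

def doublingMajorant (a : ℕ → ℕ) : ℕ → ℕ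
  | 0 => max (a 0) 1
  | k + 1 => max (a (k + 1)) (2 * doublingMajorant a k)

section DoublingMajorant

variable (a : ℕ → ℕ)

theorem le_doublingMajorant (k : ℕ) : a k ≤ doublingMajorant a k := by
  cases k <;> exact le_max_left _ _

theorem one_le_doublingMajorant (k : ℕ) : 1 ≤ doublingMajorant a k := by
  induction k with
  | zero => exact le_max_right _ _
  | succ k ih => exact le_trans (by omega) (le_max_right _ _)

theorem two_mul_doublingMajorant_le (k : ℕ) :
    2 * doublingMajorant a k ≤ doublingMajorant a (k + 1) :=
  le_max_right _ _

theorem strictMono_doublingMajorant : StrictMono (doublingMajorant a) :=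
  strictMono_nat_of_lt_succ fun k => by
    have := two_mul_doublingMajorant_le a k
    have := one_le_doublingMajorant a k
    omega

theorem lt_doublingMajorant (k : ℕ) : k < doublingMajorant a k := by
  induction k with
  | zero => exact one_le_doublingMajorant a 0
  | succ k ih =>
    have := two_mul_doublingMajorant_le a k
    omega

noncomputable def blockIndex (i : ℕ) : ℕ :=
  Nat.find (⟨i, lt_doublingMajorant a i⟩ : ∃ k, i < doublingMajorant a k)

theorem blockIndex_mono : Monotone (blockIndex a) := fun _ _ hij =>
  Nat.find_mono fun _ hk => lt_of_le_of_lt hij hk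

theorem blockIndex_eq_zero {i : ℕ} (hi : i < doublingMajorant a 0) : blockIndex a i = 0 :=
  Nat.find_eq_zero _ |>.2 hi

theorem blockIndex_eq_succ {i k : ℕ} (hk : doublingMajorant a k ≤ i)
    (hi : i < doublingMajorant a (k + 1)) : blockIndex a i = k + 1 :=
  (Nat.find_eq_iff _).2
    ⟨hi, fun _ hn => not_lt.2 (((strictMono_doublingMajorant a).monotone (by omega)).trans hk)⟩

end DoublingMajorant

-- `1 / b (k + 1)` on the block `[b k, b (k + 1))` and `1 / b 0` below `b 0`, where
-- `b = doublingMajorant a`.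
noncomputable def slowSlope (a : ℕ → ℕ) (i : ℕ) : ℝ :=
  (doublingMajorant a (blockIndex a i) : ℝ)⁻¹

section SlowSlope

variable (a : ℕ → ℕ)

theorem doublingMajorant_cast_pos (k : ℕ) : (0 : ℝ) < doublingMajorant a k := by
  exact_mod_cast one_le_doublingMajorant a k

theorem slowSlope_pos (i : ℕ) : 0 < slowSlope a i :=
  inv_pos.2 (doublingMajorant_cast_pos a _)

theorem slowSlope_le_one (i : ℕ) : slowSlope a i ≤ 1 :=
  inv_le_one_of_one_le₀ (by exact_mod_cast one_le_doublingMajorant a _)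

theorem antitone_slowSlope : Antitone (slowSlope a) := fun _ _ hij =>
  inv_anti₀ (doublingMajorant_cast_pos a _)
    (by exact_mod_cast (strictMono_doublingMajorant a).monotone (blockIndex_mono a hij))

theorem sum_slowSlope_first_block :
    ∑ i ∈ Finset.range (doublingMajorant a 0), slowSlope a i = 1 := by
  rw [Finset.sum_congr rfl fun i hi => by
    rw [slowSlope, blockIndex_eq_zero a (Finset.mem_range.1 hi)]]
  simp [(doublingMajorant_cast_pos a 0).ne']

theorem sum_slowSlope_block (k : ℕ) :
    ∑ i ∈ Finset.Ico (doublingMajorant a k) (doublingMajorant a (k + 1)), slowSlope a i =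
      1 - doublingMajorant a k / doublingMajorant a (k + 1) := by
  rw [Finset.sum_congr rfl fun i hi => by
    rw [slowSlope, blockIndex_eq_succ a (Finset.mem_Ico.1 hi).1 (Finset.mem_Ico.1 hi).2]]
  have := (doublingMajorant_cast_pos a (k + 1)).ne'
  rw [Finset.sum_const, Nat.card_Ico, nsmul_eq_mul,
    Nat.cast_sub (strictMono_doublingMajorant a k.lt_succ_self).le]
  field_simp

theorem sum_range_slowSlope_mem_Icc (k : ℕ) :
    ∑ i ∈ Finset.range (doublingMajorant a k), slowSlope a i ∈ Icc ((k : ℝ) / 2) (k + 1) := by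
  induction k with
  | zero => simp [sum_slowSlope_first_block]
  | succ k ih =>
    rw [← Finset.sum_range_add_sum_Ico _ (strictMono_doublingMajorant a k.lt_succ_self).le,
      sum_slowSlope_block]
    have hdouble : 2 * (doublingMajorant a k : ℝ) ≤ doublingMajorant a (k + 1) := by
      exact_mod_cast two_mul_doublingMajorant_le a k
    have hratio : (doublingMajorant a k : ℝ) / doublingMajorant a (k + 1) ≤ 1 / 2 := by
      rw [div_le_iff₀ (doublingMajorant_cast_pos a _)]; linarith
    have hratio' : 0 ≤ (doublingMajorant a k : ℝ) / doublingMajorant a (k + 1) := by positivity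
    push_cast
    constructor <;> linarith [ih.1, ih.2]

theorem not_summable_slowSlope : ¬ Summable (slowSlope a) := fun hs => by
  obtain ⟨k, hk⟩ := exists_nat_gt (2 * ∑' i, slowSlope a i)
  have := (sum_range_slowSlope_mem_Icc a k).1.trans
    (hs.sum_le_tsum _ fun i _ => (slowSlope_pos a i).le)
  linarith

theorem sum_range_slowSlope_le (k : ℕ) : ∑ i ∈ Finset.range (a k), slowSlope a i ≤ k + 1 :=
  (Finset.sum_le_sum_of_subset_of_nonneg (Finset.range_subset_range.2 (le_doublingMajorant a k))
    fun i _ _ => (slowSlope_pos a i).le).trans (sum_range_slowSlope_mem_Icc a k).2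

theorem concaveProfile_slowSlope_le (k : ℕ) : concaveProfile (slowSlope a) (a k) ≤ k + 1 :=
  (concaveProfile.le_sum_range (antitone_slowSlope a) (a k)).trans (sum_range_slowSlope_le a k)

end SlowSlope

theorem ofReal_exp_le_one_add_tsum_indicator {Ω : Type*} (Y : Ω → ℝ) (ω : Ω) :
    ENNReal.ofReal (exp (Y ω)) ≤
      1 + ∑' k : ℕ, {ω | (k : ℝ) < Y ω}.indicator (fun _ => ENNReal.ofReal (exp (k + 1))) ω := by
  rcases le_or_gt (Y ω) 0 with hneg | hpos
  · exact (ENNReal.ofReal_le_one.2 (exp_le_one_iff.2 hneg)).trans le_self_add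
  obtain ⟨n, hn, hn'⟩ : ∃ n : ℕ, (n : ℝ) < Y ω ∧ Y ω ≤ n + 1 := by
    have hceil : 1 ≤ ⌈Y ω⌉₊ := Nat.one_le_iff_ne_zero.2 (Nat.ceil_pos.2 hpos).ne'
    refine ⟨⌈Y ω⌉₊ - 1, ?_, ?_⟩ <;> push_cast [hceil]
    · linarith [Nat.ceil_lt_add_one hpos.le]
    · linarith [Nat.le_ceil (Y ω)]
  calc ENNReal.ofReal (exp (Y ω))
      ≤ {ω | (n : ℝ) < Y ω}.indicator (fun _ => ENNReal.ofReal (exp (n + 1))) ω := by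
        rw [indicator_of_mem (show ω ∈ {ω | (n : ℝ) < Y ω} from hn)]
        exact ENNReal.ofReal_le_ofReal (exp_le_exp.2 hn')
    _ ≤ _ := (ENNReal.le_tsum n).trans le_add_self

section ExpMoment

variable {Ω : Type*} [MeasurableSpace Ω] {μ : Measure Ω}

theorem tendsto_measure_natCast_lt_atTop [IsFiniteMeasure μ] {X : Ω → ℝ} (hX : Measurable X) :
    Tendsto (fun n : ℕ => μ {ω | (n : ℝ) < X ω}) atTop (𝓝 0) := by
  have hanti : Antitone fun n : ℕ => {ω | (n : ℝ) < X ω} :=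
    fun m n hmn ω (hω : (n : ℝ) < X ω) => show (m : ℝ) < X ω from (Nat.cast_le.2 hmn).trans_lt hω
  have hempty : ⋂ n : ℕ, {ω | (n : ℝ) < X ω} = ∅ := eq_empty_of_forall_notMem fun ω hω =>
    (exists_nat_ge (X ω)).elim fun n hn => (mem_iInter.1 hω n).not_ge hn
  simpa [Function.comp_def, hempty] using tendsto_measure_iInter_atTop
    (fun n => (measurableSet_lt measurable_const hX).nullMeasurableSet) hanti
    ⟨0, measure_ne_top μ _⟩

theorem lintegral_exp_lt_top_of_measure_lt_le [IsFiniteMeasure μ] {Y : Ω → ℝ} (hY : Measurable Y)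
    (htail : ∀ k : ℕ, μ {ω | (k : ℝ) < Y ω} ≤ ENNReal.ofReal (exp (-2 * k))) :
    ∫⁻ ω, ENNReal.ofReal (exp (Y ω)) ∂μ < ∞ := by
  have hmeas (k : ℕ) : MeasurableSet {ω | (k : ℝ) < Y ω} := measurableSet_lt measurable_const hY
  have hsum : Summable fun k : ℕ => exp (k + 1) * exp (-2 * k) := by
    refine (summable_exp_neg_nat.mul_left (exp 1)).congr fun k => ?_
    rw [← exp_add, ← exp_add]; ring_nf
  calc ∫⁻ ω, ENNReal.ofReal (exp (Y ω)) ∂μ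
      ≤ ∫⁻ ω, 1 + ∑' k : ℕ,
          {ω | (k : ℝ) < Y ω}.indicator (fun _ => ENNReal.ofReal (exp (k + 1))) ω ∂μ :=
        lintegral_mono (ofReal_exp_le_one_add_tsum_indicator Y)
    _ = μ univ + ∑' k : ℕ, ENNReal.ofReal (exp (k + 1)) * μ {ω | (k : ℝ) < Y ω} := by
        rw [lintegral_add_left measurable_const, lintegral_const, one_mul,
          lintegral_tsum fun k => (measurable_const.indicator (hmeas k)).aemeasurable]
        simp only [lintegral_indicator_const (hmeas _)]
    _ ≤ μ univ + ∑' k : ℕ, ENNReal.ofReal (exp (k + 1) * exp (-2 * k)) := by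
        gcongr with k
        rw [ENNReal.ofReal_mul (exp_nonneg _)]
        gcongr
        exact htail k
    _ < ∞ := by
        rw [← ENNReal.ofReal_tsum_of_nonneg (fun _ => by positivity) hsum]
        exact ENNReal.add_lt_top.2 ⟨measure_lt_top μ univ, ENNReal.ofReal_lt_top⟩

end ExpMoment

theorem exists_concave_diff_finite_exp_moment_general
    {Ω : Type*} [MeasurableSpace Ω] (P : Measure Ω) [IsProbabilityMeasure P]
    (χ : Ω → ℝ) (hχmeas : Measurable χ) :
    ∃ g : ℝ → ℝ, ConcaveOn ℝ (Set.Ici (0 : ℝ)) g ∧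
      (∀ x ∈ Set.Ici (0 : ℝ), 0 ≤ g x) ∧
      g 0 = 0 ∧
      DifferentiableOn ℝ g (Set.Ici (0 : ℝ)) ∧
      (∀ x ∈ Set.Ici (0 : ℝ), derivWithin g (Set.Ici (0 : ℝ)) x ≤ 1) ∧
      Tendsto g atTop atTop ∧
      (∫⁻ ω, ENNReal.ofReal (Real.exp (g (χ ω))) ∂P < ∞) := by
  choose a ha using fun k : ℕ =>
    ((tendsto_measure_natCast_lt_atTop (μ := P) hχmeas).eventually_lt_const
      (ENNReal.ofReal_pos.2 (exp_pos (-2 * ((k + 1 : ℕ) : ℝ))))).exists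
  have hanti := antitone_slowSlope a
  have hnonneg (i : ℕ) : 0 ≤ slowSlope a i := (slowSlope_pos a i).le
  set g := concaveProfile (slowSlope a)
  have hmono : Monotone g := concaveProfile.monotone hanti hnonneg
  have hdiff : Differentiable ℝ g := concaveProfile.differentiable hanti
  refine ⟨g, (concaveProfile.concaveOn hanti).subset (subset_univ _) (convex_Ici 0),
    fun x hx => concaveProfile.zero _ ▸ hmono hx, concaveProfile.zero _, hdiff.differentiableOn,
    fun x hx => concaveProfile.derivWithin_Ici_le hanti (slowSlope_le_one a) hx,
    concaveProfile.tendsto_atTop hanti hnonneg (not_summable_slowSlope a),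
    lintegral_exp_lt_top_of_measure_lt_le (hdiff.continuous.measurable.comp hχmeas) ?_⟩
  rintro (_ | k)
  · simpa using prob_le_one
  refine (measure_mono fun ω (hω : ((k + 1 : ℕ) : ℝ) < g (χ ω)) => ?_).trans (ha k).le
  by_contra hle
  have := (hmono (not_lt.1 hle)).trans (concaveProfile_slowSlope_le a k)
  push_cast at hω
  linarith

/-- **Lemma 5.** For any random variable `χ ≥ 0` there is a differentiable concave function
`g : [0,∞) → [0,∞)` with `g(0) = 0`, `g' ≤ 1`, `g(x) → ∞` and `E e^{g(χ)} < ∞`. -/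
theorem exists_concave_diff_finite_exp_moment
    {Ω : Type*} [MeasurableSpace Ω] (P : Measure Ω) [IsProbabilityMeasure P]
    (χ : Ω → ℝ) (hχmeas : Measurable χ) (hχnonneg : ∀ ω, 0 ≤ χ ω) :
    ∃ g : ℝ → ℝ, ConcaveOn ℝ (Set.Ici (0 : ℝ)) g ∧
      (∀ x ∈ Set.Ici (0 : ℝ), 0 ≤ g x) ∧
      g 0 = 0 ∧
      DifferentiableOn ℝ g (Set.Ici (0 : ℝ)) ∧
      (∀ x ∈ Set.Ici (0 : ℝ), derivWithin g (Set.Ici (0 : ℝ)) x ≤ 1) ∧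
      Tendsto g atTop atTop ∧
      (∫⁻ ω, ENNReal.ofReal (Real.exp (g (χ ω))) ∂P < ∞) :=
  exists_concave_diff_finite_exp_moment_general P χ hχmeas
end

section
/- Let ξ ≥ 0 be a heavy-tailed random variable with distribution F, E ξ < ∞, and let τ be a counting random variable with E τ < ∞ such that, for some c > E ξ, P(cτ > x) = o(\bar F(x)) as x → ∞ and the distribution of cτ is heavy-tailed. Then there exists an increasing concave function f : [0,∞) → ℝ such that E[ξ e^{f(ξ)}] = ∞ and E[τ e^{f(cτ)}] < ∞. -/
open MeasureTheory ProbabilityTheory Filter Real Set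
open scoped ENNReal

/-!
Write `a t = E[ξ; ξ > t]` and `b t = E[cτ; cτ > t]`. If `F` is the primitive of a positive
antitone slope function `s`, the layer-cake formula gives
`E[X e^{F X}] = E X + ∫_0^∞ e^{F t} s t E[X; X > t] dt`,
so it suffices to have `∫ e^F s a = ∞` and `∫ e^F s b < ∞`. Tail domination yields `b ≤ ε a`
eventually, for every `ε > 0`, and the heavy tail of `ξ` makes `∫ e^{σ t} a t dt` diverge for
every `σ > 0`. The slope function is built in stages of decreasing slope: stage `n` first
travels, with a slope so small that this costs at most `2⁻ⁿ` against `b`, to a point beyond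
which `b ≤ 2⁻ⁿ a`, and then continues until it has collected mass exactly `1` against `a`, hence
at most `2⁻ⁿ` against `b`.
-/

noncomputable def primitive (s : ℝ → ℝ) (x : ℝ) : ℝ := ∫ t in (0 : ℝ)..x, s t

section Primitive

variable {s : ℝ → ℝ}

lemma primitive_sub_primitive (hs : Antitone s) (x y : ℝ) :
    primitive s y - primitive s x = ∫ t in x..y, s t :=
  intervalIntegral.integral_interval_sub_left hs.intervalIntegrable hs.intervalIntegrable

lemma Antitone.mul_sub_le_integral (hs : Antitone s) {x y : ℝ} (hxy : x ≤ y) :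
    s y * (y - x) ≤ ∫ t in x..y, s t := by
  have := intervalIntegral.integral_mono_on (μ := volume) hxy intervalIntegrable_const
    hs.intervalIntegrable fun t ht => hs ht.2
  simpa [mul_comm] using this

lemma Antitone.integral_le_mul_sub (hs : Antitone s) {x y : ℝ} (hxy : x ≤ y) :
    ∫ t in x..y, s t ≤ s x * (y - x) := by
  have := intervalIntegral.integral_mono_on (μ := volume) hxy hs.intervalIntegrable
    intervalIntegrable_const fun t ht => hs ht.1
  simpa [mul_comm] using this

lemma concaveOn_primitive (hs : Antitone s) : ConcaveOn ℝ univ (primitive s) := by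
  refine concaveOn_of_slope_anti_adjacent convex_univ fun {x y z} _ _ hxy hyz => ?_
  rw [primitive_sub_primitive hs, primitive_sub_primitive hs,
    div_le_div_iff₀ (sub_pos.2 hyz) (sub_pos.2 hxy)]
  calc (∫ t in y..z, s t) * (y - x) ≤ s y * (z - y) * (y - x) :=
        mul_le_mul_of_nonneg_right (hs.integral_le_mul_sub hyz.le) (sub_nonneg.2 hxy.le)
    _ = s y * (y - x) * (z - y) := by ring
    _ ≤ (∫ t in x..y, s t) * (z - y) :=
        mul_le_mul_of_nonneg_right (hs.mul_sub_le_integral hxy.le) (sub_nonneg.2 hyz.le)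

lemma strictMono_primitive (hs : Antitone s) (hs0 : ∀ t, 0 < s t) : StrictMono (primitive s) :=
  fun x y hxy => by
    have := hs.mul_sub_le_integral hxy.le
    rw [← primitive_sub_primitive hs] at this
    nlinarith [hs0 y]

lemma continuous_primitive (hs : Antitone s) : Continuous (primitive s) :=
  intervalIntegral.continuous_primitive (fun _ _ => hs.intervalIntegrable) 0

lemma primitive_zero : primitive s 0 = 0 := intervalIntegral.integral_same

/-- The chain rule `(exp ∘ F)' = exp ∘ F · s` holds off the countably many jumps of `s`. -/
lemma integral_exp_primitive_mul (hs : Antitone s) (x : ℝ) :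
    ∫ t in (0 : ℝ)..x, exp (primitive s t) * s t = exp (primitive s x) - 1 := by
  have hF := continuous_primitive hs
  have hderiv : ∀ t, ContinuousAt s t → HasDerivAt (primitive s) (s t) t := fun t ht =>
    intervalIntegral.integral_hasDerivAt_right hs.intervalIntegrable
      hs.measurable.stronglyMeasurable.stronglyMeasurableAtFilter ht
  have := integral_eq_of_hasDerivAt_off_countable (a := 0) (b := x) (fun t => exp (primitive s t))
    (fun t => exp (primitive s t) * s t) hs.countable_not_continuousAt hF.rexp.continuousOn
    (fun t ht => (hderiv t (not_not.1 ht.2)).exp)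
    (hs.intervalIntegrable.continuousOn_mul hF.rexp.continuousOn)
  simpa [primitive_zero] using this

lemma primitive_eq_add_of_eqOn (hs : Antitone s) {x y c : ℝ} (hc : ∀ t ∈ Ico x y, s t = c)
    {t : ℝ} (ht : t ∈ Icc x y) : primitive s t = primitive s x + c * (t - x) := by
  rw [← sub_eq_iff_eq_add', primitive_sub_primitive hs, intervalIntegral.integral_of_le ht.1,
    ← setIntegral_congr_set Ico_ae_eq_Ioc, setIntegral_congr_fun measurableSet_Ico
      fun u hu => hc u ⟨hu.1, hu.2.trans_le ht.2⟩]
  simp [ht.1, mul_comm]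

end Primitive

/-- The index `k` of the interval `[p k, p (k + 1))` containing `t`, for `t ≥ p 0`. -/
noncomputable def pieceIndex (p : ℕ → ℝ) (t : ℝ) : ℕ := sInf {k | t < p (k + 1)}

section PieceIndex

variable {p : ℕ → ℝ}

lemma pieceIndex_eq (hp : Monotone p) {k : ℕ} {t : ℝ} (ht : t ∈ Ico (p k) (p (k + 1))) :
    pieceIndex p t = k :=
  le_antisymm (Nat.sInf_le ht.2) <| le_csInf ⟨k, ht.2⟩ fun j hj => by
    by_contra! hjk
    exact (hp (Nat.succ_le_of_lt hjk)).trans ht.1 |>.not_gt hj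

lemma nonempty_setOf_lt_succ (hp_top : Tendsto p atTop atTop) (t : ℝ) :
    {k | t < p (k + 1)}.Nonempty :=
  ((tendsto_add_atTop_iff_nat 1).2 hp_top).eventually_gt_atTop t |>.exists

lemma mem_Ico_pieceIndex (hp_top : Tendsto p atTop atTop) {t : ℝ} (ht : p 0 ≤ t) :
    t ∈ Ico (p (pieceIndex p t)) (p (pieceIndex p t + 1)) := by
  refine ⟨?_, Nat.sInf_mem (nonempty_setOf_lt_succ hp_top t)⟩
  rcases h : pieceIndex p t with _ | j
  · exact ht
  · exact not_lt.1 (Nat.notMem_of_lt_sInf (s := {k | t < p (k + 1)}) (by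
      rw [← pieceIndex, h]; exact j.lt_succ_self))

lemma pieceIndex_mono (hp_top : Tendsto p atTop atTop) : Monotone (pieceIndex p) :=
  fun _ u htu => csInf_le_csInf (OrderBot.bddBelow _) (nonempty_setOf_lt_succ hp_top u)
    fun _ hj => htu.trans_lt hj

lemma iUnion_Ico_eq_Ici (hp : Monotone p) (hp_top : Tendsto p atTop atTop) :
    ⋃ n, Ico (p n) (p (n + 1)) = Ici (p 0) :=
  subset_antisymm (iUnion_subset fun n _ ht => (hp n.zero_le).trans ht.1) fun _ ht =>
    mem_iUnion.2 ⟨_, mem_Ico_pieceIndex hp_top ht⟩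

lemma lintegral_Ici_eq_tsum (hp : Monotone p) (hp_top : Tendsto p atTop atTop)
    (f : ℝ → ℝ≥0∞) :
    ∫⁻ t in Ici (p 0), f t = ∑' n, ∫⁻ t in Ico (p n) (p (n + 1)), f t := by
  rw [← iUnion_Ico_eq_Ici hp hp_top, lintegral_iUnion (fun _ => measurableSet_Ico)]
  simpa [Order.succ_eq_add_one] using hp.pairwise_disjoint_on_Ico_succ

end PieceIndex

lemma exists_intervalIntegral_eq_one {g : ℝ → ℝ} (hg0 : ∀ t, 0 ≤ g t)
    (hg : ∀ x y, IntervalIntegrable g volume x y) (htop : ¬ IntegrableOn g (Ioi 0)) (r : ℝ) :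
    ∃ q, r < q ∧ ∫ t in r..q, g t = 1 := by
  have hcont := intervalIntegral.continuous_primitive hg r
  by_contra! hne
  have hlt : ∀ q, r ≤ q → ∫ t in r..q, g t < 1 := fun q hrq => by
    by_contra! hle
    obtain ⟨c, hc, hc1⟩ := intermediate_value_Icc hrq hcont.continuousOn
      ⟨by simp, hle⟩
    rcases hc.1.eq_or_lt with rfl | hrc
    · simp at hc1
    · exact hne c hrc hc1
  refine htop (integrableOn_Ioi_of_intervalIntegral_norm_bounded ((∫ t in (0:ℝ)..r, g t) + 1) 0
    (fun q => (hg 0 q).1) tendsto_id ((eventually_ge_atTop r).mono fun q hq => ?_))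
  simp only [Real.norm_of_nonneg (hg0 _)]
  rw [← intervalIntegral.integral_add_adjacent_intervals (hg 0 r) (hg r q)]
  linarith [hlt q hq]

lemma exists_seq_of_forall_exists_succ {α : Type*} (P : ℕ → α → Prop) (Q : α → α → Prop)
    {x₀ : α} (h₀ : P 0 x₀) (h : ∀ n x, P n x → ∃ y, P (n + 1) y ∧ Q x y) :
    ∃ u : ℕ → α, u 0 = x₀ ∧ ∀ n, P n (u n) ∧ Q (u n) (u (n + 1)) := by
  choose g hgP hgQ using h
  let v : ∀ n, {x // P n x} := fun n => Nat.rec ⟨x₀, h₀⟩ (fun n x => ⟨g n x.1 x.2, hgP ..⟩) n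
  exact ⟨fun n => (v n).1, rfl, fun n => ⟨(v n).2, hgQ n _ (v n).2⟩⟩

/-- On `[start, finish]` the slope is `slope` and the function starts from `value`; the part
`[start, turn]` is travelled cheaply and `[turn, finish]` collects the mass against `a`. -/
structure Stage where
  start : ℝ
  turn : ℝ
  finish : ℝ
  value : ℝ
  slope : ℝ

namespace Stage

def line (S : Stage) (t : ℝ) : ℝ := S.value + S.slope * (t - S.start)

/-- `travel_cost` bounds the integral of `exp (S.line t) * S.slope * b t` over `[start, turn]`,
as `b ≤ b 0` there. -/
structure IsAdmissible (a b : ℝ → ℝ) (n : ℕ) (S : Stage) : Prop where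
  slope_pos : 0 < S.slope
  start_add_one_le_turn : S.start + 1 ≤ S.turn
  turn_lt_finish : S.turn < S.finish
  le_of_turn_le : ∀ t, S.turn ≤ t → b t ≤ (1 / 2) ^ n * a t
  travel_cost : (S.turn - S.start) * (exp (S.line S.turn) * S.slope * b 0) ≤ (1 / 2) ^ n
  growth_mass : ∫ t in S.turn..S.finish, exp (S.line t) * S.slope * a t = 1

structure IsChain (S : ℕ → Stage) : Prop where
  start_zero : (S 0).start = 0
  value_zero : (S 0).value = 0
  start_add_one_le_finish : ∀ n, (S n).start + 1 ≤ (S n).finish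
  start_succ : ∀ n, (S (n + 1)).start = (S n).finish
  value_succ : ∀ n, (S (n + 1)).value = (S n).line (S n).finish
  slope_succ_le : ∀ n, (S (n + 1)).slope ≤ (S n).slope

variable {a b : ℝ → ℝ}

lemma exists_isAdmissible (ha : Antitone a) (ha0 : ∀ t, 0 ≤ a t) (hb0 : 0 ≤ b 0)
    (hheavy : ∀ σ > 0, ¬ IntegrableOn (fun t => exp (σ * t) * σ * a t) (Ioi 0))
    (hdom : ∀ ε > 0, ∀ᶠ t in atTop, b t ≤ ε * a t) (n : ℕ) (p v θ : ℝ) (hθ : 0 < θ) :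
    ∃ S : Stage, S.start = p ∧ S.value = v ∧ S.slope ≤ θ ∧ S.IsAdmissible a b n := by
  obtain ⟨R, hR⟩ := eventually_atTop.1 (hdom _ (by positivity : (0 : ℝ) < (1 / 2) ^ n))
  set r := max (p + 1) R
  have hd : 1 ≤ r - p := by linarith [le_max_left (p + 1) R]
  set δ := min 1 ((1 / 2) ^ n / (exp (v + 1) * (b 0 + 1)))
  have hδ : 0 < δ := lt_min one_pos (by positivity)
  set η := min θ (δ / (r - p))
  have hη : 0 < η := lt_min hθ (by positivity)
  have hηd : η * (r - p) ≤ δ := by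
    calc η * (r - p) ≤ δ / (r - p) * (r - p) :=
          mul_le_mul_of_nonneg_right (min_le_right _ _) (by linarith)
      _ = δ := div_mul_cancel₀ _ (by linarith)
  set g := fun t => exp (v + η * (t - p)) * η * a t
  have hg_heavy : ¬ IntegrableOn g (Ioi 0) := fun hint => hheavy η hη <| by
    refine IntegrableOn.congr_fun (hint.const_mul (exp (η * p - v))) (fun t _ => ?_)
      measurableSet_Ioi
    simp only [g, ← mul_assoc, ← exp_add]
    ring_nf
  obtain ⟨q, hrq, hq⟩ := exists_intervalIntegral_eq_one (fun t => by positivity [ha0 t])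
    (fun _ _ => ha.intervalIntegrable.continuousOn_mul (by fun_prop)) hg_heavy r
  refine ⟨⟨p, r, q, v, η⟩, rfl, rfl, min_le_left _ _, ⟨hη, le_max_left _ _, hrq,
    fun t ht => hR t ((le_max_right _ _).trans ht), ?_, hq⟩⟩
  simp only [line]
  calc (r - p) * (exp (v + η * (r - p)) * η * b 0)
      = η * (r - p) * exp (v + η * (r - p)) * b 0 := by ring
    _ ≤ δ * exp (v + 1) * (b 0 + 1) := by
        gcongr
        · linarith [min_le_left 1 ((1 / 2) ^ n / (exp (v + 1) * (b 0 + 1)))]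
        · linarith
    _ ≤ (1 / 2) ^ n / (exp (v + 1) * (b 0 + 1)) * exp (v + 1) * (b 0 + 1) := by
        gcongr; exact min_le_right _ _
    _ = (1 / 2) ^ n := by field_simp

variable {S : Stage} {n : ℕ}

lemma IsAdmissible.lintegral_growth (hS : S.IsAdmissible a b n) (ha0 : ∀ t, 0 ≤ a t) :
    ∫⁻ t in Ico S.turn S.finish, ENNReal.ofReal (exp (S.line t) * S.slope * a t) = 1 := by
  have hint := intervalIntegral.intervalIntegrable_of_integral_ne_zero
    (hS.growth_mass.trans_ne one_ne_zero)
  rw [setLIntegral_congr Ico_ae_eq_Ioc, ← ofReal_integral_eq_lintegral_ofReal hint.1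
    (ae_of_all _ fun t => by have := hS.slope_pos; positivity [ha0 t]),
    ← intervalIntegral.integral_of_le hS.turn_lt_finish.le, hS.growth_mass, ENNReal.ofReal_one]

variable {w : ℝ → ℝ}

lemma IsAdmissible.one_le_lintegral (hS : S.IsAdmissible a b n) (ha0 : ∀ t, 0 ≤ a t)
    (hw : ∀ t ∈ Ico S.start S.finish, w t = exp (S.line t) * S.slope) :
    1 ≤ ∫⁻ t in Ico S.start S.finish, ENNReal.ofReal (w t * a t) :=
  calc 1 = ∫⁻ t in Ico S.turn S.finish, ENNReal.ofReal (w t * a t) := by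
        rw [← hS.lintegral_growth ha0]
        refine setLIntegral_congr_fun measurableSet_Ico fun t ht => ?_
        rw [hw t ⟨by linarith [hS.start_add_one_le_turn, ht.1], ht.2⟩]
    _ ≤ _ := lintegral_mono_set (Ico_subset_Ico_left (by linarith [hS.start_add_one_le_turn]))

lemma IsAdmissible.lintegral_travel_le (hS : S.IsAdmissible a b n) (hb : Antitone b)
    (hb0 : 0 ≤ b 0) (hstart : 0 ≤ S.start)
    (hw : ∀ t ∈ Ico S.start S.finish, w t = exp (S.line t) * S.slope) :
    ∫⁻ t in Ico S.start S.turn, ENNReal.ofReal (w t * b t) ≤ ENNReal.ofReal ((1 / 2) ^ n) := by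
  have hslope := hS.slope_pos
  calc ∫⁻ t in Ico S.start S.turn, ENNReal.ofReal (w t * b t)
      ≤ ∫⁻ t in Ico S.start S.turn, ENNReal.ofReal (exp (S.line S.turn) * S.slope * b 0) := by
        refine setLIntegral_mono measurable_const fun t ht => ENNReal.ofReal_le_ofReal ?_
        rw [hw t ⟨ht.1, ht.2.trans hS.turn_lt_finish⟩]
        have hline : S.line t ≤ S.line S.turn := by
          simp only [line]; nlinarith [ht.2]
        calc exp (S.line t) * S.slope * b t ≤ exp (S.line t) * S.slope * b 0 := by
              gcongr; exact hb (hstart.trans ht.1)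
          _ ≤ exp (S.line S.turn) * S.slope * b 0 := by gcongr
    _ = ENNReal.ofReal ((S.turn - S.start) * (exp (S.line S.turn) * S.slope * b 0)) := by
        rw [setLIntegral_const, Real.volume_Ico, mul_comm,
          ← ENNReal.ofReal_mul (by linarith [hS.start_add_one_le_turn])]
    _ ≤ ENNReal.ofReal ((1 / 2) ^ n) := ENNReal.ofReal_le_ofReal hS.travel_cost

lemma IsAdmissible.lintegral_growth_le (hS : S.IsAdmissible a b n) (ha0 : ∀ t, 0 ≤ a t)
    (hw : ∀ t ∈ Ico S.start S.finish, w t = exp (S.line t) * S.slope) :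
    ∫⁻ t in Ico S.turn S.finish, ENNReal.ofReal (w t * b t) ≤ ENNReal.ofReal ((1 / 2) ^ n) := by
  have hslope := hS.slope_pos
  calc ∫⁻ t in Ico S.turn S.finish, ENNReal.ofReal (w t * b t)
      ≤ ∫⁻ t in Ico S.turn S.finish,
          ENNReal.ofReal ((1 / 2) ^ n) * ENNReal.ofReal (exp (S.line t) * S.slope * a t) := by
        refine setLIntegral_mono' measurableSet_Ico fun t ht => ?_
        rw [← ENNReal.ofReal_mul (by positivity),
          hw t ⟨by linarith [hS.start_add_one_le_turn, ht.1], ht.2⟩]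
        refine ENNReal.ofReal_le_ofReal ?_
        calc exp (S.line t) * S.slope * b t
            ≤ exp (S.line t) * S.slope * ((1 / 2) ^ n * a t) := by
              gcongr; exact hS.le_of_turn_le t ht.1
          _ = _ := by ring
    _ = ENNReal.ofReal ((1 / 2) ^ n) := by
        rw [lintegral_const_mul' _ _ ENNReal.ofReal_ne_top, hS.lintegral_growth ha0, mul_one]

lemma IsAdmissible.lintegral_le (hS : S.IsAdmissible a b n) (ha0 : ∀ t, 0 ≤ a t)
    (hb : Antitone b) (hb0 : 0 ≤ b 0) (hstart : 0 ≤ S.start)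
    (hw : ∀ t ∈ Ico S.start S.finish, w t = exp (S.line t) * S.slope) :
    ∫⁻ t in Ico S.start S.finish, ENNReal.ofReal (w t * b t) ≤
      2 * ENNReal.ofReal ((1 / 2) ^ n) := by
  rw [← Ico_union_Ico_eq_Ico (by linarith [hS.start_add_one_le_turn]) hS.turn_lt_finish.le,
    two_mul]
  exact (lintegral_union_le _ _ _).trans (add_le_add (hS.lintegral_travel_le hb hb0 hstart hw)
    (hS.lintegral_growth_le ha0 hw))

lemma exists_isChain_isAdmissible (ha : Antitone a) (ha0 : ∀ t, 0 ≤ a t) (hb0 : 0 ≤ b 0)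
    (hheavy : ∀ σ > 0, ¬ IntegrableOn (fun t => exp (σ * t) * σ * a t) (Ioi 0))
    (hdom : ∀ ε > 0, ∀ᶠ t in atTop, b t ≤ ε * a t) :
    ∃ S : ℕ → Stage, IsChain S ∧ ∀ n, (S n).IsAdmissible a b n := by
  have hstage := exists_isAdmissible ha ha0 hb0 hheavy hdom
  obtain ⟨S₀, hS₀start, hS₀value, -, hS₀⟩ := hstage 0 0 0 1 one_pos
  obtain ⟨S, rfl, hS⟩ := exists_seq_of_forall_exists_succ
    (fun n (S : Stage) => S.IsAdmissible a b n)
    (fun (S S' : Stage) => S'.start = S.finish ∧ S'.value = S.line S.finish ∧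
      S'.slope ≤ S.slope) hS₀
    fun n (S : Stage) hS => by
      obtain ⟨S', h₁, h₂, h₃, h₄⟩ :=
        hstage (n + 1) S.finish (S.line S.finish) S.slope hS.slope_pos
      exact ⟨S', h₄, h₁, h₂, h₃⟩
  refine ⟨S, ⟨hS₀start, hS₀value, fun n => ?_, fun n => (hS n).2.1, fun n => (hS n).2.2.1,
    fun n => (hS n).2.2.2⟩, fun n => (hS n).1⟩
  linarith [(hS n).1.start_add_one_le_turn, (hS n).1.turn_lt_finish]

noncomputable def chainSlope (S : ℕ → Stage) (t : ℝ) : ℝ :=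
  (S (pieceIndex (fun n => (S n).start) t)).slope

namespace IsChain

variable {S : ℕ → Stage}

lemma start_add_one_le_start_succ (hS : IsChain S) (n : ℕ) :
    (S n).start + 1 ≤ (S (n + 1)).start :=
  hS.start_succ n ▸ hS.start_add_one_le_finish n

lemma monotone_start (hS : IsChain S) : Monotone fun n => (S n).start :=
  monotone_nat_of_le_succ fun n => by linarith [hS.start_add_one_le_start_succ n]

lemma natCast_le_start (hS : IsChain S) (n : ℕ) : (n : ℝ) ≤ (S n).start := by
  induction n with
  | zero => simp [hS.start_zero]
  | succ n ih => push_cast; linarith [hS.start_add_one_le_start_succ n]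

lemma tendsto_start (hS : IsChain S) : Tendsto (fun n => (S n).start) atTop atTop :=
  tendsto_atTop_mono hS.natCast_le_start tendsto_natCast_atTop_atTop

lemma antitone_chainSlope (hS : IsChain S) : Antitone (chainSlope S) :=
  (antitone_nat_of_succ_le (f := fun n => (S n).slope) hS.slope_succ_le).comp_monotone
    (pieceIndex_mono hS.tendsto_start)

lemma chainSlope_eq (hS : IsChain S) {n : ℕ} {t : ℝ} (ht : t ∈ Ico (S n).start (S n).finish) :
    chainSlope S t = (S n).slope := by
  rw [← hS.start_succ] at ht
  rw [chainSlope, pieceIndex_eq hS.monotone_start ht]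

lemma primitive_chainSlope_start (hS : IsChain S) (n : ℕ) :
    primitive (chainSlope S) (S n).start = (S n).value := by
  induction n with
  | zero => rw [hS.start_zero, hS.value_zero, primitive_zero]
  | succ n ih =>
    rw [hS.start_succ, primitive_eq_add_of_eqOn hS.antitone_chainSlope (fun _ => hS.chainSlope_eq)
      ⟨by linarith [hS.start_add_one_le_finish n], le_rfl⟩, ih, hS.value_succ, line]

lemma exp_primitive_mul_chainSlope (hS : IsChain S) {n : ℕ} {t : ℝ}
    (ht : t ∈ Ico (S n).start (S n).finish) :
    exp (primitive (chainSlope S) t) * chainSlope S t = exp ((S n).line t) * (S n).slope := by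
  rw [hS.chainSlope_eq ht, primitive_eq_add_of_eqOn hS.antitone_chainSlope
    (fun _ => hS.chainSlope_eq) (Ico_subset_Icc_self ht), hS.primitive_chainSlope_start, line]

lemma lintegral_Ioi_eq_tsum (hS : IsChain S) (f : ℝ → ℝ≥0∞) :
    ∫⁻ t in Ioi 0, f t = ∑' n, ∫⁻ t in Ico (S n).start (S n).finish, f t := by
  rw [setLIntegral_congr Ioi_ae_eq_Ici, ← hS.start_zero,
    lintegral_Ici_eq_tsum hS.monotone_start hS.tendsto_start]
  simp only [hS.start_succ]

end IsChain

end Stage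

theorem exists_antitone_separating_slope {a b : ℝ → ℝ} (ha : Antitone a) (ha0 : ∀ t, 0 ≤ a t)
    (hb : Antitone b) (hb0 : 0 ≤ b 0)
    (hheavy : ∀ σ > 0, ¬ IntegrableOn (fun t => exp (σ * t) * σ * a t) (Ioi 0))
    (hdom : ∀ ε > 0, ∀ᶠ t in atTop, b t ≤ ε * a t) :
    ∃ s : ℝ → ℝ, Antitone s ∧ (∀ t, 0 < s t) ∧
      ∫⁻ t in Ioi 0, ENNReal.ofReal (exp (primitive s t) * s t * a t) = ∞ ∧
      ∫⁻ t in Ioi 0, ENNReal.ofReal (exp (primitive s t) * s t * b t) < ∞ := by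
  obtain ⟨S, hchain, hS⟩ := Stage.exists_isChain_isAdmissible ha ha0 hb0 hheavy hdom
  have hw := fun n (t : ℝ) => hchain.exp_primitive_mul_chainSlope (n := n) (t := t)
  refine ⟨Stage.chainSlope S, hchain.antitone_chainSlope, fun t => (hS _).slope_pos, ?_, ?_⟩
  · rw [hchain.lintegral_Ioi_eq_tsum, eq_top_iff]
    calc ∞ = ∑' _ : ℕ, (1 : ℝ≥0∞) := (ENNReal.tsum_const_eq_top_of_ne_zero one_ne_zero).symm
      _ ≤ _ := ENNReal.tsum_le_tsum fun n => (hS n).one_le_lintegral ha0 (hw n)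
  · rw [hchain.lintegral_Ioi_eq_tsum]
    calc _ ≤ ∑' n : ℕ, 2 * ENNReal.ofReal ((1 / 2) ^ n) := ENNReal.tsum_le_tsum fun n =>
          (hS n).lintegral_le ha0 hb hb0 ((Nat.cast_nonneg n).trans (hchain.natCast_le_start n))
            (hw n)
      _ = 2 * ENNReal.ofReal (∑' n : ℕ, (1 / 2 : ℝ) ^ n) := by
          rw [ENNReal.tsum_mul_left, ENNReal.ofReal_tsum_of_nonneg (fun n => by positivity)
            summable_geometric_two]
      _ < ∞ := ENNReal.mul_lt_top (by simp) ENNReal.ofReal_lt_top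

noncomputable def tailMoment {Ω : Type*} [MeasurableSpace Ω] (μ : Measure Ω) (X : Ω → ℝ)
    (t : ℝ) : ℝ :=
  ∫ ω in {ω | t < X ω}, X ω ∂μ

section TailMoment

variable {Ω : Type*} [MeasurableSpace Ω] {μ : Measure Ω} {X : Ω → ℝ}

lemma tailMoment_nonneg (hX0 : ∀ ω, 0 ≤ X ω) (t : ℝ) : 0 ≤ tailMoment μ X t :=
  integral_nonneg hX0

lemma antitone_tailMoment (hX0 : ∀ ω, 0 ≤ X ω) (hXint : Integrable X μ) :
    Antitone (tailMoment μ X) := fun _ u htu =>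
  setIntegral_mono_set hXint.integrableOn (ae_of_all _ hX0)
    (ae_of_all _ fun ω (hω : u < X ω) => htu.trans_lt hω)

lemma ofReal_tailMoment_eq_withDensity (hX : Measurable X) (hX0 : ∀ ω, 0 ≤ X ω)
    (hXint : Integrable X μ) (t : ℝ) :
    ENNReal.ofReal (tailMoment μ X t) =
      μ.withDensity (fun ω => ENNReal.ofReal (X ω)) {ω | t < X ω} := by
  rw [withDensity_apply _ (measurableSet_lt measurable_const hX), tailMoment,
    ofReal_integral_eq_lintegral_ofReal hXint.integrableOn (ae_of_all _ hX0)]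

/-- Layer cake for `ω ↦ X ω * (exp (F (X ω)) - 1)`, with `F` the primitive of `s`. -/
lemma lintegral_ofReal_mul_exp_primitive (hX : Measurable X) (hX0 : ∀ ω, 0 ≤ X ω)
    (hXint : Integrable X μ) {s : ℝ → ℝ} (hs : Antitone s) (hs0 : ∀ t, 0 ≤ s t) :
    ∫⁻ ω, ENNReal.ofReal (X ω * exp (primitive s (X ω))) ∂μ =
      ∫⁻ ω, ENNReal.ofReal (X ω) ∂μ +
        ∫⁻ t in Ioi 0, ENNReal.ofReal (exp (primitive s t) * s t * tailMoment μ X t) := by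
  have hF := continuous_primitive hs
  have hpt : ∀ ω, ENNReal.ofReal (X ω * exp (primitive s (X ω))) = ENNReal.ofReal (X ω) +
      ENNReal.ofReal (X ω) * ENNReal.ofReal (∫ t in (0 : ℝ)..X ω, exp (primitive s t) * s t) :=
    fun ω => by
      have : 1 ≤ exp (primitive s (X ω)) :=
        one_le_exp (intervalIntegral.integral_nonneg (hX0 ω) fun t _ => hs0 t)
      rw [integral_exp_primitive_mul hs, ← ENNReal.ofReal_mul (hX0 ω),
        ← ENNReal.ofReal_add (hX0 ω) (mul_nonneg (hX0 ω) (by linarith))]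
      ring_nf
  have hmeas : Measurable fun ω =>
      ENNReal.ofReal (∫ t in (0 : ℝ)..X ω, exp (primitive s t) * s t) := by
    simp_rw [integral_exp_primitive_mul hs]
    exact (hF.rexp.measurable.comp hX).sub_const 1 |>.ennreal_ofReal
  have hdensity := lintegral_withDensity_eq_lintegral_mul μ hX.ennreal_ofReal hmeas
  simp only [Pi.mul_apply] at hdensity
  rw [lintegral_congr hpt, lintegral_add_left hX.ennreal_ofReal, ← hdensity,
    lintegral_comp_eq_lintegral_meas_lt_mul _ (ae_of_all _ hX0) hX.aemeasurable
      (fun _ _ => hs.intervalIntegrable.continuousOn_mul hF.rexp.continuousOn)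
      (ae_of_all _ fun t => mul_nonneg (exp_pos _).le (hs0 t))]
  congr 1
  refine setLIntegral_congr_fun measurableSet_Ioi fun t _ => ?_
  rw [← ofReal_tailMoment_eq_withDensity hX hX0 hXint,
    ← ENNReal.ofReal_mul (tailMoment_nonneg hX0 t), mul_comm]

lemma not_integrableOn_exp_mul_tailMoment [IsFiniteMeasure μ] (hX : Measurable X)
    (hX0 : ∀ ω, 0 ≤ X ω) (hXint : Integrable X μ) {σ : ℝ} (hσ : 0 < σ)
    (hheavy : ∫⁻ ω, ENNReal.ofReal (exp (σ * X ω)) ∂μ = ∞) :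
    ¬ IntegrableOn (fun t => exp (σ * t) * σ * tailMoment μ X t) (Ioi 0) := by
  intro hint
  have hprim : primitive (fun _ => σ) = fun x => σ * x := by ext x; simp [primitive, mul_comm]
  have key := lintegral_ofReal_mul_exp_primitive hX hX0 hXint antitone_const fun _ => hσ.le
  simp only [hprim] at key
  have hfin : ∫⁻ ω, ENNReal.ofReal (X ω * exp (σ * X ω)) ∂μ < ∞ := by
    rw [key]
    exact ENNReal.add_lt_top.2 ⟨hXint.lintegral_lt_top, hint.lintegral_lt_top⟩
  have hle : ∀ ω, ENNReal.ofReal (exp (σ * X ω)) ≤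
      ENNReal.ofReal (X ω * exp (σ * X ω)) + ENNReal.ofReal (exp σ) := fun ω => by
    rw [← ENNReal.ofReal_add (mul_nonneg (hX0 ω) (exp_pos _).le) (exp_pos _).le]
    refine ENNReal.ofReal_le_ofReal ?_
    rcases le_total (X ω) 1 with h | h
    · nlinarith [exp_le_exp.2 (mul_le_of_le_one_right hσ.le h), hX0 ω, exp_pos (σ * X ω)]
    · nlinarith [exp_pos (σ * X ω), exp_pos σ]
  refine (lintegral_mono hle).trans_lt ?_ |>.ne hheavy
  rw [lintegral_add_right _ measurable_const, lintegral_const]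
  exact ENNReal.add_lt_top.2 ⟨hfin, ENNReal.mul_lt_top ENNReal.ofReal_lt_top (measure_lt_top _ _)⟩

lemma ofReal_tailMoment_eq_lintegral (hX : Measurable X) (hX0 : ∀ ω, 0 ≤ X ω)
    (hXint : Integrable X μ) (t : ℝ) :
    ENNReal.ofReal (tailMoment μ X t) = ∫⁻ u in Ioi 0, μ {ω | max u t < X ω} := by
  rw [tailMoment, ofReal_integral_eq_lintegral_ofReal hXint.integrableOn (ae_of_all _ hX0),
    lintegral_eq_lintegral_meas_lt _ (ae_of_all _ hX0) hX.aemeasurable]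
  refine lintegral_congr fun u => ?_
  rw [Measure.restrict_apply (measurableSet_lt measurable_const hX)]
  congr 1
  ext ω
  simp

variable {Y : Ω → ℝ}

lemma eventually_tailMoment_le_mul [IsFiniteMeasure μ] (hX : Measurable X) (hX0 : ∀ ω, 0 ≤ X ω)
    (hXint : Integrable X μ) (hY : Measurable Y) (hY0 : ∀ ω, 0 ≤ Y ω) (hYint : Integrable Y μ)
    (hXY : (fun x => (μ {ω | Y ω > x}).toReal) =o[atTop] (fun x => (μ {ω | X ω > x}).toReal))
    {ε : ℝ} (hε : 0 < ε) : ∀ᶠ t in atTop, tailMoment μ Y t ≤ ε * tailMoment μ X t := by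
  obtain ⟨R, hR⟩ := eventually_atTop.1 (hXY.def hε)
  have htail : ∀ x ≥ R, μ {ω | x < Y ω} ≤ ENNReal.ofReal ε * μ {ω | x < X ω} := fun x hx => by
    have := hR x hx
    simp only [Real.norm_of_nonneg ENNReal.toReal_nonneg] at this
    rw [← ENNReal.ofReal_toReal (measure_ne_top μ {ω | x < X ω}), ← ENNReal.ofReal_mul hε.le,
      ← ENNReal.ofReal_toReal (measure_ne_top μ {ω | x < Y ω})]
    exact ENNReal.ofReal_le_ofReal this
  refine eventually_atTop.2 ⟨R, fun t ht => ?_⟩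
  rw [← ENNReal.ofReal_le_ofReal_iff (mul_nonneg hε.le (tailMoment_nonneg hX0 t)),
    ENNReal.ofReal_mul hε.le, ofReal_tailMoment_eq_lintegral hX hX0 hXint,
    ofReal_tailMoment_eq_lintegral hY hY0 hYint, ← lintegral_const_mul' _ _ ENNReal.ofReal_ne_top]
  exact lintegral_mono fun u => htail _ (ht.trans (le_max_right u t))

end TailMoment

theorem exists_increasing_concave_separating_function_general
    {Ω : Type*} [MeasurableSpace Ω] (P : Measure Ω) [IsProbabilityMeasure P]
    (ξ : Ω → ℝ) (τ : Ω → ℕ)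
    (hξmeas : Measurable ξ) (hτmeas : Measurable τ)
    (hξnonneg : ∀ ω, 0 ≤ ξ ω)
    (hheavy : ∀ ε > (0 : ℝ), ∫⁻ ω, ENNReal.ofReal (Real.exp (ε * ξ ω)) ∂P = ∞)
    (hξint : Integrable ξ P)
    (hτint : Integrable (fun ω => (τ ω : ℝ)) P)
    (c : ℝ) (hc : ∫ ω, ξ ω ∂P < c)
    (hlittleo : (fun x => (P {ω | c * (τ ω : ℝ) > x}).toReal)
        =o[atTop] (fun x => (P {ω | ξ ω > x}).toReal)) :
    ∃ f : ℝ → ℝ, StrictMonoOn f (Set.Ici (0 : ℝ)) ∧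
      ConcaveOn ℝ (Set.Ici (0 : ℝ)) f ∧
      (∫⁻ ω, ENNReal.ofReal (ξ ω * Real.exp (f (ξ ω))) ∂P = ∞) ∧
      (∫⁻ ω, ENNReal.ofReal ((τ ω : ℝ) * Real.exp (f (c * (τ ω : ℝ)))) ∂P < ∞) := by
  have hc0 : 0 < c := (integral_nonneg hξnonneg).trans_lt hc
  set η : Ω → ℝ := fun ω => c * τ ω
  have hηmeas : Measurable η := measurable_const.mul (measurable_from_top.comp hτmeas)
  have hη0 : ∀ ω, 0 ≤ η ω := fun ω => by positivity
  have hηint : Integrable η P := hτint.const_mul c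
  obtain ⟨s, hs, hs0, hdiv, hconv⟩ := exists_antitone_separating_slope
    (antitone_tailMoment hξnonneg hξint) (tailMoment_nonneg hξnonneg)
    (antitone_tailMoment hη0 hηint) (tailMoment_nonneg hη0 0)
    (fun σ hσ => not_integrableOn_exp_mul_tailMoment hξmeas hξnonneg hξint hσ (hheavy σ hσ))
    (fun ε hε => eventually_tailMoment_le_mul hξmeas hξnonneg hξint hηmeas hη0 hηint hlittleo hε)
  refine ⟨primitive s, (strictMono_primitive hs hs0).strictMonoOn _,
    (concaveOn_primitive hs).subset (subset_univ _) (convex_Ici 0), ?_, ?_⟩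
  · rw [lintegral_ofReal_mul_exp_primitive hξmeas hξnonneg hξint hs fun t => (hs0 t).le, hdiv,
      add_top]
  · have hτη : ∀ ω, ENNReal.ofReal (τ ω * exp (primitive s (η ω))) =
        ENNReal.ofReal c⁻¹ * ENNReal.ofReal (η ω * exp (primitive s (η ω))) := fun ω => by
      rw [← ENNReal.ofReal_mul (inv_nonneg.2 hc0.le), ← mul_assoc, inv_mul_cancel_left₀ hc0.ne']
    rw [lintegral_congr hτη, lintegral_const_mul' _ _ ENNReal.ofReal_ne_top,
      lintegral_ofReal_mul_exp_primitive hηmeas hη0 hηint hs fun t => (hs0 t).le]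
    exact ENNReal.mul_lt_top ENNReal.ofReal_lt_top
      (ENNReal.add_lt_top.2 ⟨hηint.lintegral_lt_top, hconv⟩)

/-- **Key construction in the proof of Theorem 1.** If `ξ ≥ 0` is heavy-tailed with finite
mean, `τ` is a counting random variable with `E τ < ∞`, and for some `c > E ξ` the tail of
`cτ` is `o(P(ξ > x))` while `cτ` is heavy-tailed, then there is an increasing concave `f`
with `E[ξ e^{f(ξ)}] = ∞` and `E[τ e^{f(cτ)}] < ∞`. -/
theorem exists_increasing_concave_separating_function
    {Ω : Type*} [MeasurableSpace Ω] (P : Measure Ω) [IsProbabilityMeasure P]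
    (ξ : Ω → ℝ) (τ : Ω → ℕ)
    (hξmeas : Measurable ξ) (hτmeas : Measurable τ)
    (hξnonneg : ∀ ω, 0 ≤ ξ ω)
    (hheavy : ∀ ε > (0 : ℝ), ∫⁻ ω, ENNReal.ofReal (Real.exp (ε * ξ ω)) ∂P = ∞)
    (hξint : Integrable ξ P)
    (hτint : Integrable (fun ω => (τ ω : ℝ)) P)
    (c : ℝ) (hc : ∫ ω, ξ ω ∂P < c)
    (hlittleo : (fun x => (P {ω | c * (τ ω : ℝ) > x}).toReal)
        =o[atTop] (fun x => (P {ω | ξ ω > x}).toReal))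
    (hτheavy : ∀ ε > (0 : ℝ),
        ∫⁻ ω, ENNReal.ofReal (Real.exp (ε * (c * (τ ω : ℝ)))) ∂P = ∞) :
    ∃ f : ℝ → ℝ, StrictMonoOn f (Set.Ici (0 : ℝ)) ∧
      ConcaveOn ℝ (Set.Ici (0 : ℝ)) f ∧
      (∫⁻ ω, ENNReal.ofReal (ξ ω * Real.exp (f (ξ ω))) ∂P = ∞) ∧
      (∫⁻ ω, ENNReal.ofReal ((τ ω : ℝ) * Real.exp (f (c * (τ ω : ℝ)))) ∂P < ∞) :=
  exists_increasing_concave_separating_function_general P ξ τ hξmeas hτmeas hξnonneg hheavy hξint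
    hτint c hc hlittleo
end

section
/- Let F_* and G_* be two heavy-tailed probability distributions on [0,∞) with tails satisfying \bar G_*(x) = o(\bar F_*(x)) as x → ∞. Then there exists an increasing convex function h : [0,∞) → [0,∞) such that ∫_0^∞ e^x \bar F_*(h(x)) dx = ∞ and ∫_0^∞ e^x \bar G_*(h(x)) dx < ∞. -/
/-!
The function `h` is a convex polyline with knots `0 = T₀ < T₁ < ⋯ → ∞` and increasing slopes.
Since `F⋆` is heavy-tailed, `F̄⋆(t)` is not `O(e^{-δt})` for any `δ > 0`, so along any line of
positive slope the weight `∫ eˣ F̄⋆(h x) dx` of an interval eventually exceeds `1`; by continuity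
the knots can be placed so that every block `(Tₙ, Tₙ₊₁]` has weight exactly `1`. A block of
weight `1` cannot be too short, so a steep enough slope makes `h ≥ zₙ` on the `n`-th block, where
`Ḡ⋆ ≤ 2⁻ⁿ F̄⋆` beyond `zₙ`. The `F⋆`-integral is then `∑ 1 = ∞` and the `G⋆`-integral at most
`∑ 2⁻ⁿ < ∞`.
-/

open MeasureTheory ProbabilityTheory Filter Real Set
open scoped ENNReal

section ExpWeighted

variable {g : ℝ → ℝ}

lemma Antitone.intervalIntegrable_exp_mul (hg : Antitone g) (a b : ℝ) :
    IntervalIntegrable (fun x ↦ exp x * g x) volume a b :=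
  hg.intervalIntegrable.continuousOn_mul continuous_exp.continuousOn

lemma integral_exp_mul_le (hg : Antitone g) (hg1 : ∀ x, g x ≤ 1) {a b : ℝ} (hab : a ≤ b) :
    ∫ x in a..b, exp x * g x ≤ exp b - exp a := by
  rw [← integral_exp]
  exact intervalIntegral.integral_mono_on hab (hg.intervalIntegrable_exp_mul a b)
    (continuous_exp.intervalIntegrable a b)
    fun x _ ↦ mul_le_of_le_one_right (exp_nonneg x) (hg1 x)

lemma le_integral_exp_mul (hg : Antitone g) {a b : ℝ} (hab : a ≤ b) :
    (exp b - exp a) * g b ≤ ∫ x in a..b, exp x * g x := by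
  rw [← integral_exp, ← intervalIntegral.integral_mul_const]
  exact intervalIntegral.integral_mono_on hab ((continuous_exp.intervalIntegrable a b).mul_const _)
    (hg.intervalIntegrable_exp_mul a b)
    fun x hx ↦ mul_le_mul_of_nonneg_left (hg hx.2) (exp_nonneg x)

lemma Antitone.exists_one_le_integral_exp_mul (hg : Antitone g)
    (hfreq : ∀ M, ∃ x ≥ M, 2 * exp (-x) < g x) (a : ℝ) :
    ∃ b ≥ a, 1 ≤ ∫ x in a..b, exp x * g x := by
  obtain ⟨b, hb, hgb⟩ := hfreq (a + 1)
  refine ⟨b, by linarith, le_trans ?_ (le_integral_exp_mul hg (by linarith))⟩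
  have hab : 2 * exp a ≤ exp b := by
    calc 2 * exp a ≤ exp 1 * exp a := by gcongr; exact (add_one_le_exp 1).trans' (by norm_num)
      _ ≤ exp b := by rw [← exp_add]; gcongr; linarith
  have : 2 * exp (-b) * exp b = 2 := by rw [mul_assoc, ← exp_add]; simp
  nlinarith [exp_pos (-b), exp_pos b]

lemma exists_intervalIntegral_eq {f : ℝ → ℝ} (hf : ∀ a b, IntervalIntegrable f volume a b)
    {a b y : ℝ} (hab : a ≤ b) (hy : 0 ≤ y) (hyb : y ≤ ∫ x in a..b, f x) :
    ∃ c ∈ Icc a b, ∫ x in a..c, f x = y :=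
  intermediate_value_Icc hab (intervalIntegral.continuous_primitive hf a).continuousOn
    ⟨by simpa using hy, hyb⟩

end ExpWeighted

def HeavyTailed (μ : Measure ℝ) : Prop :=
  ∀ ε > (0 : ℝ), ∫⁻ x, ENNReal.ofReal (exp (ε * x)) ∂μ = ∞

lemma ofReal_exp_mul_le_add_tsum_indicator {ε : ℝ} (hε : 0 ≤ ε) (M x : ℝ) :
    ENNReal.ofReal (exp (ε * x)) ≤ ENNReal.ofReal (exp (ε * M)) +
      ∑' k : ℕ, (Ioi (M + k)).indicator (fun _ ↦ ENNReal.ofReal (exp (ε * (M + k + 1)))) x := by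
  rcases le_or_gt x M with hxM | hMx
  · exact le_add_right (ENNReal.ofReal_le_ofReal (exp_le_exp.2 (by gcongr)))
  obtain ⟨k, hk⟩ : ∃ k : ℕ, (k : ℝ) = ⌈x - M⌉₊ - 1 :=
    ⟨⌈x - M⌉₊ - 1, by rw [Nat.cast_sub (Nat.one_le_iff_ne_zero.2 (by positivity)), Nat.cast_one]⟩
  have hlt : M + k < x := by linarith [Nat.ceil_lt_add_one (sub_nonneg.2 hMx.le)]
  have hle : x ≤ M + k + 1 := by linarith [Nat.le_ceil (x - M)]
  refine le_add_left (le_trans ?_ (ENNReal.le_tsum k))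
  rw [indicator_of_mem (mem_Ioi.2 hlt)]
  exact ENNReal.ofReal_le_ofReal (exp_le_exp.2 (by gcongr))

lemma lintegral_exp_mul_lt_top_of_measure_Ioi_le {μ : Measure ℝ} [IsFiniteMeasure μ]
    {ε δ C M : ℝ} (hε : 0 ≤ ε) (hεδ : ε < δ)
    (htail : ∀ t ≥ M, μ (Ioi t) ≤ ENNReal.ofReal (C * exp (-δ * t))) :
    ∫⁻ x, ENNReal.ofReal (exp (ε * x)) ∂μ < ∞ := by
  set r := ENNReal.ofReal (exp (ε - δ))
  set D := ENNReal.ofReal (C * exp (ε * (M + 1) - δ * M))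
  have hterm (k : ℕ) : ENNReal.ofReal (exp (ε * (M + k + 1))) * μ (Ioi (M + k)) ≤ D * r ^ k := by
    calc _ ≤ ENNReal.ofReal (exp (ε * (M + k + 1))) * ENNReal.ofReal (C * exp (-δ * (M + k))) := by
          gcongr; exact htail _ (by simp)
      _ = D * r ^ k := by
          rw [← ENNReal.ofReal_pow (exp_nonneg _), ← ENNReal.ofReal_mul (exp_nonneg _),
            ← ENNReal.ofReal_mul' (by positivity), ← exp_nat_mul, mul_left_comm, mul_assoc,
            ← exp_add, ← exp_add]
          ring_nf
  have hr : r < 1 := ENNReal.ofReal_lt_one.2 (Real.exp_lt_one_iff.2 (by linarith))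
  calc ∫⁻ x, ENNReal.ofReal (exp (ε * x)) ∂μ
      ≤ ∫⁻ x, (ENNReal.ofReal (exp (ε * M)) + ∑' k : ℕ,
          (Ioi (M + k)).indicator (fun _ ↦ ENNReal.ofReal (exp (ε * (M + k + 1)))) x) ∂μ :=
        lintegral_mono (ofReal_exp_mul_le_add_tsum_indicator hε M)
    _ = ENNReal.ofReal (exp (ε * M)) * μ univ +
          ∑' k : ℕ, ENNReal.ofReal (exp (ε * (M + k + 1))) * μ (Ioi (M + k)) := by
        rw [lintegral_add_left measurable_const, lintegral_const,
          lintegral_tsum fun k ↦ (measurable_const.indicator measurableSet_Ioi).aemeasurable]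
        simp_rw [lintegral_indicator_const measurableSet_Ioi]
    _ ≤ ENNReal.ofReal (exp (ε * M)) * μ univ + ∑' k : ℕ, D * r ^ k :=
        add_le_add_right (ENNReal.tsum_le_tsum hterm) _
    _ < ∞ := by
        rw [ENNReal.tsum_mul_left]
        exact ENNReal.add_lt_top.2 ⟨ENNReal.mul_lt_top ENNReal.ofReal_lt_top (measure_lt_top _ _),
          ENNReal.mul_lt_top ENNReal.ofReal_lt_top (tsum_geometric_lt_top.2 hr)⟩

lemma HeavyTailed.exists_lt_measure_Ioi {μ : Measure ℝ} [IsFiniteMeasure μ] (hμ : HeavyTailed μ)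
    {δ : ℝ} (hδ : 0 < δ) (C M : ℝ) :
    ∃ t ≥ M, ENNReal.ofReal (C * exp (-δ * t)) < μ (Ioi t) := by
  by_contra! h
  exact (lintegral_exp_mul_lt_top_of_measure_Ioi_le (half_pos hδ).le (half_lt_self hδ) h).ne
    (hμ _ (half_pos hδ))

section Knot

variable {μ : Measure ℝ}

lemma antitone_measureReal_Ioi_affine [IsFiniteMeasure μ] (T v : ℝ) {c : ℝ} (hc : 0 ≤ c) :
    Antitone fun x ↦ μ.real (Ioi (v + c * (x - T))) :=
  fun _ _ hxy ↦ measureReal_mono (Ioi_subset_Ioi (by gcongr))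

lemma HeavyTailed.exists_integral_exp_mul_measureReal_Ioi_eq_one [IsFiniteMeasure μ]
    (hμ : HeavyTailed μ) (T v : ℝ) {c : ℝ} (hc : 0 < c) :
    ∃ b ≥ T, ∫ x in T..b, exp x * μ.real (Ioi (v + c * (x - T))) = 1 := by
  have hg := antitone_measureReal_Ioi_affine (μ := μ) T v hc.le
  have hfreq (M : ℝ) : ∃ x ≥ M, 2 * exp (-x) < μ.real (Ioi (v + c * (x - T))) := by
    obtain ⟨t, ht, hlt⟩ := hμ.exists_lt_measure_Ioi (inv_pos.2 hc) (2 * exp (v / c - T))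
      (v + c * (M - T))
    refine ⟨T + (t - v) / c, ?_, ?_⟩
    · rw [ge_iff_le, ← sub_le_iff_le_add', le_div_iff₀ hc]; linarith
    · rw [show v + c * (T + (t - v) / c - T) = t by field_simp; ring]
      rw [← ofReal_measureReal] at hlt
      convert (ENNReal.ofReal_lt_ofReal_iff'.1 hlt).1 using 1
      rw [mul_assoc, ← exp_add]; congr 2; field_simp; ring
  obtain ⟨b₀, hTb₀, hb₀⟩ := hg.exists_one_le_integral_exp_mul hfreq T
  obtain ⟨b, hb, hb1⟩ :=
    exists_intervalIntegral_eq hg.intervalIntegrable_exp_mul hTb₀ zero_le_one hb₀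
  exact ⟨b, hb.1, hb1⟩

lemma HeavyTailed.exists_next_knot [IsProbabilityMeasure μ] (hμ : HeavyTailed μ)
    (T v p z : ℝ) : ∃ c b, p ≤ c ∧ 0 < c ∧ exp T + 1 ≤ exp b ∧ z ≤ v + c * (b - T) ∧
      ∫ x in T..b, exp x * μ.real (Ioi (v + c * (x - T))) = 1 := by
  set ℓ := log (1 + exp (-T))
  have hℓ : 0 < ℓ := log_pos (lt_add_of_pos_right 1 (exp_pos (-T)))
  set c := max (max p 1) ((z - v) / ℓ)
  have hc : 0 < c := lt_of_lt_of_le one_pos ((le_max_right p 1).trans (le_max_left _ _))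
  obtain ⟨b, hTb, hb⟩ := hμ.exists_integral_exp_mul_measureReal_Ioi_eq_one T v hc
  have hexp : exp T + 1 ≤ exp b := by
    linarith [hb ▸ integral_exp_mul_le (antitone_measureReal_Ioi_affine T v hc.le)
      (fun _ ↦ measureReal_le_one) hTb]
  -- a block of weight `1` has length at least `ℓ`, since `exp (T + ℓ) = exp T + 1`
  have hℓb : ℓ ≤ b - T := by
    rw [log_le_iff_le_exp (by positivity), exp_sub, le_div_iff₀ (exp_pos T), add_mul, ← exp_add]
    simpa [add_comm] using hexp
  refine ⟨c, b, (le_max_left p 1).trans (le_max_left _ _), hc, hexp, ?_, hb⟩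
  calc z = v + (z - v) / ℓ * ℓ := by field_simp; ring
    _ ≤ v + c * (b - T) := by gcongr; exact le_max_right _ _

end Knot

def linePiece (T v s : ℕ → ℝ) (n : ℕ) (x : ℝ) : ℝ := v n + s n * (x - T n)

/-- The upper envelope of the lines `linePiece T v s n`: when consecutive lines meet at the knots
`T (n + 1)` and the slopes `s n` increase, this is the polyline through the points `(T n, v n)`. -/
noncomputable def polyline (T v s : ℕ → ℝ) (x : ℝ) : ℝ := ⨆ n, linePiece T v s n x

section Polyline

variable {T v s : ℕ → ℝ} {x : ℝ}

lemma linePiece_succ_sub (hv : ∀ n, v (n + 1) = v n + s n * (T (n + 1) - T n)) (n : ℕ) :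
    linePiece T v s (n + 1) x - linePiece T v s n x = (s (n + 1) - s n) * (x - T (n + 1)) := by
  simp only [linePiece, hv]; ring

lemma exists_mem_knot_interval (hTtop : Tendsto T atTop atTop) (x : ℝ) :
    ∃ n, (n = 0 ∨ T n ≤ x) ∧ x ≤ T (n + 1) := by
  classical
  have hex : ∃ n, x ≤ T (n + 1) :=
    (((tendsto_add_atTop_iff_nat 1).2 hTtop).eventually_ge_atTop x).exists
  refine ⟨Nat.find hex, ?_, Nat.find_spec hex⟩
  rcases (Nat.find hex).eq_zero_or_pos with h | h
  · exact .inl h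
  · have := Nat.find_min hex (Nat.sub_one_lt h.ne')
    rw [Nat.sub_add_cancel h] at this
    exact .inr (not_le.1 this).le

variable (hT : Monotone T) (hs : Monotone s) (hv : ∀ n, v (n + 1) = v n + s n * (T (n + 1) - T n))
include hT hs hv

lemma linePiece_le_of_knot_le {m n : ℕ} (hmn : m ≤ n) (hx : T n ≤ x) :
    linePiece T v s m x ≤ linePiece T v s n x := by
  induction n, hmn using Nat.le_induction with
  | base => rfl
  | succ n _ ih =>
    have := linePiece_succ_sub hv n (x := x)
    nlinarith [ih ((hT n.le_succ).trans hx), hs n.le_succ]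

lemma linePiece_le_of_le_knot {m n : ℕ} (hnm : n ≤ m) (hx : x ≤ T (n + 1)) :
    linePiece T v s m x ≤ linePiece T v s n x := by
  induction m, hnm using Nat.le_induction with
  | base => rfl
  | succ m hnm ih =>
    have := linePiece_succ_sub hv m (x := x)
    nlinarith [hx.trans (hT (by omega : n + 1 ≤ m + 1)), hs m.le_succ]

lemma linePiece_le_linePiece {n : ℕ} (hx₀ : n = 0 ∨ T n ≤ x) (hx₁ : x ≤ T (n + 1)) (m : ℕ) :
    linePiece T v s m x ≤ linePiece T v s n x := by
  rcases le_total m n with hmn | hnm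
  · rcases hx₀ with rfl | hx₀
    · rw [Nat.le_zero.1 hmn]
    · exact linePiece_le_of_knot_le hT hs hv hmn hx₀
  · exact linePiece_le_of_le_knot hT hs hv hnm hx₁

lemma polyline_eq {n : ℕ} (hx₀ : n = 0 ∨ T n ≤ x) (hx₁ : x ≤ T (n + 1)) :
    polyline T v s x = linePiece T v s n x :=
  have hle := linePiece_le_linePiece hT hs hv hx₀ hx₁
  le_antisymm (ciSup_le hle) (le_ciSup ⟨_, forall_mem_range.2 hle⟩ n)

variable (hTtop : Tendsto T atTop atTop)
include hTtop

lemma linePiece_le_polyline (m : ℕ) (x : ℝ) : linePiece T v s m x ≤ polyline T v s x := by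
  obtain ⟨n, hx₀, hx₁⟩ := exists_mem_knot_interval hTtop x
  rw [polyline_eq hT hs hv hx₀ hx₁]
  exact linePiece_le_linePiece hT hs hv hx₀ hx₁ m

lemma exists_polyline_eq (x : ℝ) : ∃ n, polyline T v s x = linePiece T v s n x := by
  obtain ⟨n, hx₀, hx₁⟩ := exists_mem_knot_interval hTtop x
  exact ⟨n, polyline_eq hT hs hv hx₀ hx₁⟩

lemma convexOn_polyline : ConvexOn ℝ univ (polyline T v s) := by
  refine ⟨convex_univ, fun x _ y _ a b ha hb hab ↦ ?_⟩
  obtain ⟨n, hn⟩ := exists_polyline_eq hT hs hv hTtop (a • x + b • y)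
  have hsplit : linePiece T v s n (a • x + b • y) =
      a * linePiece T v s n x + b * linePiece T v s n y := by
    simp only [linePiece, smul_eq_mul]
    linear_combination (s n * T n - v n) * hab
  rw [hn, hsplit]
  exact add_le_add (mul_le_mul_of_nonneg_left (linePiece_le_polyline hT hs hv hTtop n x) ha)
    (mul_le_mul_of_nonneg_left (linePiece_le_polyline hT hs hv hTtop n y) hb)

lemma strictMono_polyline (hs₀ : ∀ n, 0 < s n) : StrictMono (polyline T v s) := by
  intro x y hxy
  obtain ⟨n, hn⟩ := exists_polyline_eq hT hs hv hTtop x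
  calc polyline T v s x = linePiece T v s n x := hn
    _ < linePiece T v s n y := by unfold linePiece; gcongr; exact hs₀ n
    _ ≤ polyline T v s y := linePiece_le_polyline hT hs hv hTtop n y

end Polyline

lemma lintegral_Ioi_eq_tsum_lintegral_Ioc {T : ℕ → ℝ} (hT : Monotone T)
    (hTtop : Tendsto T atTop atTop) (μ : Measure ℝ) (f : ℝ → ℝ≥0∞) :
    ∫⁻ x in Ioi (T 0), f x ∂μ = ∑' n, ∫⁻ x in Ioc (T n) (T (n + 1)), f x ∂μ := by
  have hunion := iUnion_Ioc_map_succ_eq_Ioi (fun n ↦ hT (Nat.zero_le n))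
    (not_bddAbove_of_tendsto_atTop hTtop)
  simp only [Order.succ_eq_add_one, Nat.bot_eq_zero] at hunion
  have hdisj : Pairwise (Function.onFun Disjoint fun n ↦ Ioc (T n) (T (n + 1))) :=
    hT.pairwise_disjoint_on_Ioc_succ
  rw [← hunion, lintegral_iUnion (fun n ↦ measurableSet_Ioc) hdisj]

lemma exists_measure_Ioi_le_of_isLittleO {μ ν : Measure ℝ} [IsFiniteMeasure μ] [IsFiniteMeasure ν]
    (h : (fun t ↦ ν.real (Ioi t)) =o[atTop] fun t ↦ μ.real (Ioi t)) {c : ℝ} (hc : 0 < c) :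
    ∃ z, ∀ t ≥ z, ν (Ioi t) ≤ ENNReal.ofReal c * μ (Ioi t) := by
  obtain ⟨z, hz⟩ := eventually_atTop.1 (h.def hc)
  refine ⟨z, fun t ht ↦ ?_⟩
  have := hz t ht
  rw [Real.norm_of_nonneg measureReal_nonneg, Real.norm_of_nonneg measureReal_nonneg] at this
  rw [← ofReal_measureReal, ← ofReal_measureReal, ← ENNReal.ofReal_mul hc.le]
  exact ENNReal.ofReal_le_ofReal this

lemma exists_seq_of_forall_exists {α : Type*} {P : ℕ → α → α → Prop} (h : ∀ n a, ∃ b, P n a b)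
    (a₀ : α) : ∃ f : ℕ → α, f 0 = a₀ ∧ ∀ n, P n (f n) (f (n + 1)) := by
  choose g hg using h
  exact ⟨fun n ↦ Nat.rec a₀ g n, rfl, fun n ↦ hg n _⟩

/-- Knots of a convex polyline `h` whose blocks `(knot n, knot (n + 1)]` each carry weight `1` in
`∫ eˣ μ(h x, ∞) dx`, and on which `h ≥ z n`. -/
structure SeparatingKnots (μ : Measure ℝ) (z : ℕ → ℝ) where
  knot : ℕ → ℝ
  value : ℕ → ℝ
  slope : ℕ → ℝ
  knot_zero : knot 0 = 0
  value_zero_nonneg : 0 ≤ value 0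
  slope_pos : ∀ n, 0 < slope n
  slope_mono : Monotone slope
  value_succ : ∀ n, value (n + 1) = value n + slope n * (knot (n + 1) - knot n)
  exp_knot_succ : ∀ n, exp (knot n) + 1 ≤ exp (knot (n + 1))
  le_value : ∀ n, z n ≤ value n
  integral_eq_one : ∀ n,
    ∫ x in knot n..knot (n + 1), exp x * μ.real (Ioi (linePiece knot value slope n x)) = 1

lemma HeavyTailed.nonempty_separatingKnots {μ : Measure ℝ} [IsProbabilityMeasure μ]
    (hμ : HeavyTailed μ) (z : ℕ → ℝ) : Nonempty (SeparatingKnots μ z) := by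
  -- the `n`-th state is `(knot n, value n, slope (n - 1))`
  obtain ⟨f, hf₀, hf⟩ := exists_seq_of_forall_exists (a₀ := ((0 : ℝ), max (z 0) 0, (0 : ℝ)))
    (P := fun n a b ↦ a.2.2 ≤ b.2.2 ∧ 0 < b.2.2 ∧ exp a.1 + 1 ≤ exp b.1 ∧
      b.2.1 = a.2.1 + b.2.2 * (b.1 - a.1) ∧ z (n + 1) ≤ b.2.1 ∧
      ∫ x in a.1..b.1, exp x * μ.real (Ioi (a.2.1 + b.2.2 * (x - a.1))) = 1) fun n a ↦ by
    obtain ⟨c, b, hpc, hc, hexp, hz, hint⟩ := hμ.exists_next_knot a.1 a.2.1 a.2.2 (z (n + 1))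
    exact ⟨(b, a.2.1 + c * (b - a.1), c), hpc, hc, hexp, rfl, hz, hint⟩
  exact ⟨{
    knot n := (f n).1
    value n := (f n).2.1
    slope n := (f (n + 1)).2.2
    knot_zero := by simp [hf₀]
    value_zero_nonneg := by simp [hf₀]
    slope_pos n := (hf n).2.1
    slope_mono := monotone_nat_of_le_succ fun n ↦ (hf (n + 1)).1
    value_succ n := (hf n).2.2.2.1
    exp_knot_succ n := (hf n).2.2.1
    le_value n := n.casesOn (by simp [hf₀]) fun n ↦ (hf n).2.2.2.2.1
    integral_eq_one n := (hf n).2.2.2.2.2 }⟩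

namespace SeparatingKnots

variable {μ : Measure ℝ} {z : ℕ → ℝ} (K : SeparatingKnots μ z)

noncomputable def toFun : ℝ → ℝ := polyline K.knot K.value K.slope

lemma monotone_knot : Monotone K.knot :=
  monotone_nat_of_le_succ fun n ↦ exp_le_exp.1 (by linarith [K.exp_knot_succ n])

lemma tendsto_knot : Tendsto K.knot atTop atTop := by
  have hle (n : ℕ) : (n : ℝ) ≤ exp (K.knot n) := by
    induction n with
    | zero => simp [(exp_pos _).le]
    | succ n ih => push_cast; linarith [K.exp_knot_succ n]
  exact tendsto_exp_comp_atTop.1 (tendsto_atTop_mono hle tendsto_natCast_atTop_atTop)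

lemma strictMono_toFun : StrictMono K.toFun :=
  strictMono_polyline K.monotone_knot K.slope_mono K.value_succ K.tendsto_knot K.slope_pos

lemma convexOn_toFun : ConvexOn ℝ univ K.toFun :=
  convexOn_polyline K.monotone_knot K.slope_mono K.value_succ K.tendsto_knot

lemma toFun_nonneg {x : ℝ} (hx : 0 ≤ x) : 0 ≤ K.toFun x := by
  refine le_trans ?_ (linePiece_le_polyline K.monotone_knot K.slope_mono K.value_succ
    K.tendsto_knot 0 x)
  simp only [linePiece, K.knot_zero, sub_zero]
  exact add_nonneg K.value_zero_nonneg (mul_nonneg (K.slope_pos 0).le hx)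

lemma toFun_eq {n : ℕ} {x : ℝ} (hx : x ∈ Ioc (K.knot n) (K.knot (n + 1))) :
    K.toFun x = linePiece K.knot K.value K.slope n x :=
  polyline_eq K.monotone_knot K.slope_mono K.value_succ (.inr hx.1.le) hx.2

lemma le_toFun {n : ℕ} {x : ℝ} (hx : x ∈ Ioc (K.knot n) (K.knot (n + 1))) : z n ≤ K.toFun x := by
  rw [K.toFun_eq hx, linePiece]
  nlinarith [K.le_value n, K.slope_pos n, hx.1]

lemma lintegral_Ioc_eq_one [IsFiniteMeasure μ] (n : ℕ) :
    ∫⁻ x in Ioc (K.knot n) (K.knot (n + 1)), ENNReal.ofReal (exp x) * μ (Ioi (K.toFun x)) = 1 := by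
  rw [setLIntegral_congr_fun measurableSet_Ioc fun x hx ↦ by
    rw [K.toFun_eq hx, ← ofReal_measureReal, ← ENNReal.ofReal_mul (exp_nonneg x)]]
  have hint : IntegrableOn (fun x ↦ exp x * μ.real (Ioi (linePiece K.knot K.value K.slope n x)))
      (Ioc (K.knot n) (K.knot (n + 1))) :=
    ((antitone_measureReal_Ioi_affine _ _ (K.slope_pos n).le).intervalIntegrable_exp_mul _ _).1
  rw [← ofReal_integral_eq_lintegral_ofReal hint
    (Eventually.of_forall fun x ↦ mul_nonneg (exp_nonneg x) measureReal_nonneg),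
    ← intervalIntegral.integral_of_le (K.monotone_knot n.le_succ), K.integral_eq_one n,
    ENNReal.ofReal_one]

lemma lintegral_eq_top [IsFiniteMeasure μ] :
    ∫⁻ x in Ioi 0, ENNReal.ofReal (exp x) * μ (Ioi (K.toFun x)) = ∞ := by
  rw [← K.knot_zero, lintegral_Ioi_eq_tsum_lintegral_Ioc K.monotone_knot K.tendsto_knot]
  simp only [K.lintegral_Ioc_eq_one]
  exact ENNReal.tsum_const_eq_top_of_ne_zero one_ne_zero

lemma lintegral_lt_top [IsFiniteMeasure μ] {ν : Measure ℝ} {ε : ℕ → ℝ≥0∞} (hε : ∑' n, ε n ≠ ∞)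
    (hνμ : ∀ n, ∀ t ≥ z n, ν (Ioi t) ≤ ε n * μ (Ioi t)) :
    ∫⁻ x in Ioi 0, ENNReal.ofReal (exp x) * ν (Ioi (K.toFun x)) < ∞ := by
  have hblock (n : ℕ) :
      ∫⁻ x in Ioc (K.knot n) (K.knot (n + 1)), ENNReal.ofReal (exp x) * ν (Ioi (K.toFun x)) ≤
        ε n := by
    calc _ ≤ ∫⁻ x in Ioc (K.knot n) (K.knot (n + 1)),
          ε n * (ENNReal.ofReal (exp x) * μ (Ioi (K.toFun x))) :=
          setLIntegral_mono' measurableSet_Ioc fun x hx ↦ by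
            rw [mul_left_comm]; gcongr; exact hνμ n _ (K.le_toFun hx)
      _ = ε n := by
          rw [lintegral_const_mul' _ _ (ENNReal.ne_top_of_tsum_ne_top hε n),
            K.lintegral_Ioc_eq_one, mul_one]
  rw [← K.knot_zero, lintegral_Ioi_eq_tsum_lintegral_Ioc K.monotone_knot K.tendsto_knot]
  exact (ENNReal.tsum_le_tsum hblock).trans_lt hε.lt_top

end SeparatingKnots

theorem exists_increasing_convex_separating_tails_general
    (Fstar Gstar : Measure ℝ)
    [IsProbabilityMeasure Fstar] [IsProbabilityMeasure Gstar]
    (hFheavy : ∀ ε > (0 : ℝ), ∫⁻ x, ENNReal.ofReal (Real.exp (ε * x)) ∂Fstar = ∞)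
    (hlittleo : (fun x => (Gstar (Set.Ioi x)).toReal)
        =o[atTop] (fun x => (Fstar (Set.Ioi x)).toReal)) :
    ∃ h : ℝ → ℝ, StrictMonoOn h (Set.Ici (0 : ℝ)) ∧
      ConvexOn ℝ (Set.Ici (0 : ℝ)) h ∧
      (∀ x ∈ Set.Ici (0 : ℝ), 0 ≤ h x) ∧
      (∫⁻ x in Set.Ioi (0 : ℝ),
          ENNReal.ofReal (Real.exp x) * Fstar (Set.Ioi (h x)) = ∞) ∧
      (∫⁻ x in Set.Ioi (0 : ℝ),
          ENNReal.ofReal (Real.exp x) * Gstar (Set.Ioi (h x)) < ∞) := by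
  choose z hz using fun n : ℕ ↦
    exists_measure_Ioi_le_of_isLittleO hlittleo (c := 2⁻¹ ^ n) (by positivity)
  obtain ⟨K⟩ := HeavyTailed.nonempty_separatingKnots hFheavy z
  refine ⟨K.toFun, K.strictMono_toFun.strictMonoOn _, K.convexOn_toFun.subset (subset_univ _)
    (convex_Ici 0), fun x hx ↦ K.toFun_nonneg hx, K.lintegral_eq_top, K.lintegral_lt_top ?_ hz⟩
  simp only [ENNReal.ofReal_pow (by norm_num : (0 : ℝ) ≤ 2⁻¹), ENNReal.ofReal_inv_of_pos two_pos,
    ENNReal.ofReal_ofNat, ENNReal.tsum_geometric_two]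
  exact ENNReal.ofNat_ne_top

/-- **Separation of two heavy-tailed distributions.** If `F⋆` and `G⋆` are heavy-tailed
probability distributions on `[0,∞)` with `Ḡ⋆(x) = o(F̄⋆(x))`, then there is an increasing
convex `h : [0,∞) → [0,∞)` with `∫_0^∞ eˣ F̄⋆(h(x)) dx = ∞` and `∫_0^∞ eˣ Ḡ⋆(h(x)) dx < ∞`. -/
theorem exists_increasing_convex_separating_tails
    (Fstar Gstar : Measure ℝ)
    [IsProbabilityMeasure Fstar] [IsProbabilityMeasure Gstar]
    (hFsupp : Fstar (Set.Iio (0 : ℝ)) = 0) (hGsupp : Gstar (Set.Iio (0 : ℝ)) = 0)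
    (hFheavy : ∀ ε > (0 : ℝ), ∫⁻ x, ENNReal.ofReal (Real.exp (ε * x)) ∂Fstar = ∞)
    (hGheavy : ∀ ε > (0 : ℝ), ∫⁻ x, ENNReal.ofReal (Real.exp (ε * x)) ∂Gstar = ∞)
    (hlittleo : (fun x => (Gstar (Set.Ioi x)).toReal)
        =o[atTop] (fun x => (Fstar (Set.Ioi x)).toReal)) :
    ∃ h : ℝ → ℝ, StrictMonoOn h (Set.Ici (0 : ℝ)) ∧
      ConvexOn ℝ (Set.Ici (0 : ℝ)) h ∧
      (∀ x ∈ Set.Ici (0 : ℝ), 0 ≤ h x) ∧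
      (∫⁻ x in Set.Ioi (0 : ℝ),
          ENNReal.ofReal (Real.exp x) * Fstar (Set.Ioi (h x)) = ∞) ∧
      (∫⁻ x in Set.Ioi (0 : ℝ),
          ENNReal.ofReal (Real.exp x) * Gstar (Set.Ioi (h x)) < ∞) :=
  exists_increasing_convex_separating_tails_general Fstar Gstar hFheavy hlittleo
end

section
/- Let ξ ≥ 0 be a heavy-tailed random variable with distribution F, 0 < E ξ < ∞, and let τ be a counting random variable with E τ < ∞ and P(cτ > x) = o(\bar F(x)) as x → ∞ for some c > 0. Define the size-biased distributions F_*(dx) = x F(dx) / E ξ on [0,∞) and G_* as the distribution of c τ_* where P(τ_* = n) = n P(τ = n) / E τ. Then F_* is heavy-tailed and \bar G_*(x) = o(\bar F_*(x)) as x → ∞. -/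
/-! Heavy-tailedness passes to `F⋆` because `e^{εy} ≤ y e^{εy} + e^ε` for `y ≥ 0`.
For the tails, the layer-cake formula gives, for `x ≥ 0` and a random variable `X`,
`E[X; X > x] = x P(X > x) + ∫_x^∞ P(X > t) dt`. Up to constants, `F̄⋆(x)` and `Ḡ⋆(x)` are these
quantities for `X = ξ` and `X = cτ`, and they only involve the tails on `[x, ∞)`; so a bound
`P(cτ > t) ≤ δ P(ξ > t)` for `t ≥ x` becomes `Ḡ⋆(x) ≤ const · δ · F̄⋆(x)`. -/

open MeasureTheory ProbabilityTheory Filter Real Set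
open scoped ENNReal

lemma exp_mul_le_mul_exp_mul_add_exp {ε y : ℝ} (hε : 0 ≤ ε) (hy : 0 ≤ y) :
    exp (ε * y) ≤ y * exp (ε * y) + exp ε := by
  rcases le_total y 1 with hy1 | hy1
  · have : exp (ε * y) ≤ exp ε := exp_le_exp.2 (by nlinarith)
    nlinarith [exp_pos (ε * y)]
  · nlinarith [exp_pos (ε * y), exp_pos ε]

lemma lintegral_exp_withDensity_ofReal_eq_top {ν : Measure ℝ} [IsFiniteMeasure ν]
    (hν : ∀ᵐ y ∂ν, 0 ≤ y) {ε : ℝ} (hε : 0 ≤ ε)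
    (h : ∫⁻ y, ENNReal.ofReal (exp (ε * y)) ∂ν = ∞) :
    ∫⁻ y, ENNReal.ofReal (exp (ε * y)) ∂ν.withDensity ENNReal.ofReal = ∞ := by
  rw [lintegral_withDensity_eq_lintegral_mul _ ENNReal.measurable_ofReal (by fun_prop)]
  have hle : ∫⁻ y, ENNReal.ofReal (exp (ε * y)) ∂ν ≤
      ∫⁻ y, (ENNReal.ofReal * fun y => ENNReal.ofReal (exp (ε * y))) y ∂ν
        + ENNReal.ofReal (exp ε) * ν univ := by
    rw [← lintegral_const, ← lintegral_add_right _ measurable_const]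
    refine lintegral_mono_ae (hν.mono fun y hy => ?_)
    rw [Pi.mul_apply, ← ENNReal.ofReal_mul hy, ← ENNReal.ofReal_add (by positivity) (by positivity)]
    exact ENNReal.ofReal_le_ofReal (exp_mul_le_mul_exp_mul_add_exp hε hy)
  rw [h, top_le_iff, ENNReal.add_eq_top] at hle
  exact hle.resolve_right (ENNReal.mul_ne_top ENNReal.ofReal_ne_top (measure_ne_top _ _))

section Tails

variable {α : Type*} [MeasurableSpace α] (μ : Measure α) {X Y : α → ℝ}

lemma setLIntegral_ofReal_gt (hX : Measurable X) {x : ℝ} (hx : 0 ≤ x) :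
    ∫⁻ ω in {ω | x < X ω}, ENNReal.ofReal (X ω) ∂μ =
      ENNReal.ofReal x * μ {ω | x < X ω} + ∫⁻ t in Ioi x, μ {ω | t < X ω} := by
  have hs : MeasurableSet {ω | x < X ω} := measurableSet_lt measurable_const hX
  set f := {ω | x < X ω}.indicator X
  have hf : 0 ≤ f := fun ω => Set.indicator_nonneg (fun ω (h : x < X ω) => hx.trans h.le) ω
  have hlevel : ∀ t, 0 < t → {ω | t < f ω} = {ω | max x t < X ω} := fun t ht => by
    ext ω
    by_cases hω : x < X ω
    · simp [f, hω]
    · simp [f, hω, ht.le]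
  calc ∫⁻ ω in {ω | x < X ω}, ENNReal.ofReal (X ω) ∂μ
      = ∫⁻ ω, ENNReal.ofReal (f ω) ∂μ := by
        rw [← lintegral_indicator hs]
        congr 1; funext ω
        by_cases hω : x < X ω <;> simp [f, hω]
    _ = ∫⁻ t in Ioc 0 x ∪ Ioi x, μ {ω | t < f ω} := by
        rw [Ioc_union_Ioi_eq_Ioi hx,
          lintegral_eq_lintegral_meas_lt μ (ae_of_all _ hf) (hX.indicator hs).aemeasurable]
    _ = ENNReal.ofReal x * μ {ω | x < X ω} + ∫⁻ t in Ioi x, μ {ω | t < X ω} := by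
        rw [lintegral_union measurableSet_Ioi Ioc_disjoint_Ioi_same]
        congr 1
        · rw [setLIntegral_congr_fun measurableSet_Ioc (g := fun _ => μ {ω | x < X ω})
            fun t ht => by simp only [hlevel t ht.1, max_eq_left ht.2],
            setLIntegral_const, Real.volume_Ioc, sub_zero, mul_comm]
        · exact setLIntegral_congr_fun measurableSet_Ioi fun t ht => by
            simp only [hlevel t (hx.trans_lt ht), max_eq_right (mem_Ioi.1 ht).le]

lemma setLIntegral_ofReal_gt_le_of_meas_gt_le (hX : Measurable X) (hY : Measurable Y)
    {δ : ℝ≥0∞} {x : ℝ} (hx : 0 ≤ x)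
    (h : ∀ t, x ≤ t → μ {ω | t < Y ω} ≤ δ * μ {ω | t < X ω}) :
    ∫⁻ ω in {ω | x < Y ω}, ENNReal.ofReal (Y ω) ∂μ ≤
      δ * ∫⁻ ω in {ω | x < X ω}, ENNReal.ofReal (X ω) ∂μ := by
  have htail : Measurable fun t => μ {ω | t < X ω} :=
    Antitone.measurable fun s t hst => measure_mono fun ω (h : t < X ω) => hst.trans_lt h
  rw [setLIntegral_ofReal_gt μ hY hx, setLIntegral_ofReal_gt μ hX hx, mul_add,
    ← lintegral_const_mul _ htail, mul_left_comm]
  gcongr ?_ + ?_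
  · exact mul_le_mul_right (h x le_rfl) _
  · exact setLIntegral_mono (htail.const_mul δ) fun t ht => h t (mem_Ioi.1 ht).le

lemma isLittleO_setLIntegral_gt_of_isLittleO_meas_gt [IsFiniteMeasure μ]
    (hX : Measurable X) (hY : Measurable Y) (hXfin : ∫⁻ ω, ENNReal.ofReal (X ω) ∂μ ≠ ∞)
    (h : (fun x => (μ {ω | x < Y ω}).toReal) =o[atTop] fun x => (μ {ω | x < X ω}).toReal) :
    (fun x => (∫⁻ ω in {ω | x < Y ω}, ENNReal.ofReal (Y ω) ∂μ).toReal) =o[atTop]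
      fun x => (∫⁻ ω in {ω | x < X ω}, ENNReal.ofReal (X ω) ∂μ).toReal := by
  refine Asymptotics.isLittleO_iff.2 fun δ hδ => ?_
  have hbound : ∀ᶠ t in atTop, μ {ω | t < Y ω} ≤ ENNReal.ofReal δ * μ {ω | t < X ω} := by
    filter_upwards [h.def hδ] with t ht
    rw [Real.norm_of_nonneg ENNReal.toReal_nonneg, Real.norm_of_nonneg ENNReal.toReal_nonneg,
      ← ENNReal.le_ofReal_iff_toReal_le (measure_ne_top _ _) (by positivity)] at ht
    rwa [ENNReal.ofReal_mul hδ.le, ENNReal.ofReal_toReal (measure_ne_top _ _)] at ht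
  obtain ⟨x₀, hx₀⟩ := eventually_atTop.1 hbound
  filter_upwards [eventually_ge_atTop (max x₀ 0)] with x hx
  have hcmp := setLIntegral_ofReal_gt_le_of_meas_gt_le μ hX hY (le_of_max_le_right hx)
    fun t ht => hx₀ t ((le_of_max_le_left hx).trans ht)
  have hXfin' : ∫⁻ ω in {ω | x < X ω}, ENNReal.ofReal (X ω) ∂μ ≠ ∞ :=
    ne_top_of_le_ne_top hXfin (setLIntegral_le_lintegral _ _)
  rw [Real.norm_of_nonneg ENNReal.toReal_nonneg, Real.norm_of_nonneg ENNReal.toReal_nonneg,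
    ← ENNReal.toReal_ofReal hδ.le, ← ENNReal.toReal_mul]
  exact ENNReal.toReal_mono (ENNReal.mul_ne_top ENNReal.ofReal_ne_top hXfin') hcmp

lemma withDensity_ofReal_map_apply_Ioi (hX : Measurable X) (x : ℝ) :
    (μ.map X).withDensity ENNReal.ofReal (Ioi x) =
      ∫⁻ ω in {ω | x < X ω}, ENNReal.ofReal (X ω) ∂μ := by
  rw [withDensity_apply _ measurableSet_Ioi,
    setLIntegral_map measurableSet_Ioi ENNReal.measurable_ofReal hX]
  rfl

lemma map_const_mul_withDensity_natCast_apply_Ioi {τ : α → ℕ} (hτ : Measurable τ) {c : ℝ}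
    (hc : 0 < c) (x : ℝ) :
    (μ.withDensity fun ω => (τ ω : ℝ≥0∞)).map (fun ω => c * (τ ω : ℝ)) (Ioi x) =
      ENNReal.ofReal c⁻¹ * ∫⁻ ω in {ω | x < c * τ ω}, ENNReal.ofReal (c * τ ω) ∂μ := by
  have hcτ : Measurable fun ω => c * (τ ω : ℝ) := by fun_prop
  have hτ_eq : ∀ ω, ENNReal.ofReal c⁻¹ * ENNReal.ofReal (c * τ ω) = τ ω := fun ω => by
    rw [← ENNReal.ofReal_mul (by positivity), inv_mul_cancel_left₀ hc.ne', ENNReal.ofReal_natCast]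
  rw [Measure.map_apply hcτ measurableSet_Ioi, withDensity_apply _ (hcτ measurableSet_Ioi),
    ← lintegral_const_mul' _ _ ENNReal.ofReal_ne_top]
  simp_rw [hτ_eq]
  rfl

end Tails

theorem size_biased_heavy_and_littleo_general
    {Ω : Type*} [MeasurableSpace Ω] (P : Measure Ω) [IsProbabilityMeasure P]
    (ξ : Ω → ℝ) (τ : Ω → ℕ)
    (hξmeas : Measurable ξ) (hτmeas : Measurable τ)
    (hξnonneg : ∀ ω, 0 ≤ ξ ω)
    (hheavy : ∀ ε > (0 : ℝ), ∫⁻ ω, ENNReal.ofReal (Real.exp (ε * ξ ω)) ∂P = ∞)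
    (hξint : Integrable ξ P) (hξmean_pos : 0 < ∫ ω, ξ ω ∂P)
    (c : ℝ) (hcpos : 0 < c)
    (hlittleo : (fun x => (P {ω | c * (τ ω : ℝ) > x}).toReal)
        =o[atTop] (fun x => (P {ω | ξ ω > x}).toReal))
    (Fstar : Measure ℝ)
    (hFstar : Fstar = (ENNReal.ofReal (∫ ω, ξ ω ∂P))⁻¹ •
        (Measure.map ξ P).withDensity (fun x => ENNReal.ofReal x))
    (Gstar : Measure ℝ)
    (hGstar : Gstar = (ENNReal.ofReal (∫ ω, (τ ω : ℝ) ∂P))⁻¹ •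
        Measure.map (fun ω => c * (τ ω : ℝ))
          (P.withDensity (fun ω => (τ ω : ℝ≥0∞)))) :
    (∀ ε > (0 : ℝ), ∫⁻ x, ENNReal.ofReal (Real.exp (ε * x)) ∂Fstar = ∞) ∧
      (fun x => (Gstar (Set.Ioi x)).toReal)
        =o[atTop] (fun x => (Fstar (Set.Ioi x)).toReal) := by
  constructor
  · intro ε hε
    have hν : ∀ᵐ y ∂P.map ξ, 0 ≤ y :=
      (ae_map_iff hξmeas.aemeasurable measurableSet_Ici).2 (ae_of_all _ hξnonneg)
    have hνheavy : ∫⁻ y, ENNReal.ofReal (exp (ε * y)) ∂P.map ξ = ∞ := by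
      rw [lintegral_map (by fun_prop) hξmeas]
      exact hheavy ε hε
    rw [hFstar, lintegral_smul_measure, lintegral_exp_withDensity_ofReal_eq_top hν hε.le hνheavy,
      smul_eq_mul, ENNReal.mul_top (ENNReal.inv_ne_zero.2 ENNReal.ofReal_ne_top)]
  · have hm : IsUnit (ENNReal.ofReal (∫ ω, ξ ω ∂P))⁻¹.toReal := by
      simp [hξmean_pos.ne', hξmean_pos.le]
    -- No case split on `E τ = 0` is needed: `ENNReal.toReal_mul` holds unconditionally.
    simp_rw [hFstar, hGstar, Measure.smul_apply, smul_eq_mul,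
      withDensity_ofReal_map_apply_Ioi P hξmeas,
      map_const_mul_withDensity_natCast_apply_Ioi P hτmeas hcpos, ENNReal.toReal_mul]
    refine (Asymptotics.isLittleO_const_mul_right_iff' hm).2 ?_
    exact ((isLittleO_setLIntegral_gt_of_isLittleO_meas_gt P hξmeas (by fun_prop)
      hξint.lintegral_lt_top.ne hlittleo).const_mul_left _).const_mul_left _

/-- **Size-biasing step in the proof of Theorem 1.** If `ξ ≥ 0` is heavy-tailed with
`0 < E ξ < ∞` and `P(cτ > x) = o(P(ξ > x))`, then the size-biased distribution `F⋆` of `ξ`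
is heavy-tailed and the tail of the size-biased distribution `G⋆` of `cτ` satisfies
`Ḡ⋆(x) = o(F̄⋆(x))`. -/
theorem size_biased_heavy_and_littleo
    {Ω : Type*} [MeasurableSpace Ω] (P : Measure Ω) [IsProbabilityMeasure P]
    (ξ : Ω → ℝ) (τ : Ω → ℕ)
    (hξmeas : Measurable ξ) (hτmeas : Measurable τ)
    (hξnonneg : ∀ ω, 0 ≤ ξ ω)
    (hheavy : ∀ ε > (0 : ℝ), ∫⁻ ω, ENNReal.ofReal (Real.exp (ε * ξ ω)) ∂P = ∞)
    (hξint : Integrable ξ P) (hξmean_pos : 0 < ∫ ω, ξ ω ∂P)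
    (hτint : Integrable (fun ω => (τ ω : ℝ)) P)
    (c : ℝ) (hcpos : 0 < c)
    (hlittleo : (fun x => (P {ω | c * (τ ω : ℝ) > x}).toReal)
        =o[atTop] (fun x => (P {ω | ξ ω > x}).toReal))
    (Fstar : Measure ℝ)
    (hFstar : Fstar = (ENNReal.ofReal (∫ ω, ξ ω ∂P))⁻¹ •
        (Measure.map ξ P).withDensity (fun x => ENNReal.ofReal x))
    (Gstar : Measure ℝ)
    (hGstar : Gstar = (ENNReal.ofReal (∫ ω, (τ ω : ℝ) ∂P))⁻¹ •
        Measure.map (fun ω => c * (τ ω : ℝ))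
          (P.withDensity (fun ω => (τ ω : ℝ≥0∞)))) :
    (∀ ε > (0 : ℝ), ∫⁻ x, ENNReal.ofReal (Real.exp (ε * x)) ∂Fstar = ∞) ∧
      (fun x => (Gstar (Set.Ioi x)).toReal)
        =o[atTop] (fun x => (Fstar (Set.Ioi x)).toReal) :=
  size_biased_heavy_and_littleo_general P ξ τ hξmeas hτmeas hξnonneg hheavy hξint hξmean_pos c hcpos
    hlittleo Fstar hFstar Gstar hGstar
end

section
/- Let ξ, ξ_1, ξ_2, … be i.i.d. nonnegative random variables with common distribution F unbounded from the right, and let τ be an independent counting random variable. Then liminf_{x→∞} \bar{F^{*τ}}(x) / \bar F(x) ≥ E τ (with the convention that the inequality is trivially an equality when E τ = ∞). -/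
open MeasureTheory ProbabilityTheory Filter Real Set
open scoped ENNReal Topology

/-! Fix `x` and put `p = P(ξ > x)`. On `{τ = n}` the sum `S_τ` exceeds `x` as soon as one of
`ξ_0, …, ξ_{n-1}` does, so Bonferroni's inequality and the independence of `τ` from the `ξ_i`
give `n P(τ = n) p ≤ P(τ = n, S_τ > x) + n² P(τ = n) p²`. Summing over `n < N` and dividing by
`p > 0`, `∑_{n<N} n P(τ = n) ≤ P(S_τ > x) / p + N² p`, and the error term vanishes as `x → ∞`
because `p → 0`. Letting `N → ∞` recovers `E τ`. -/

namespace MeasureTheory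

variable {α : Type*} [MeasurableSpace α]

theorem sum_measure_le_measure_biUnion_add_sum_measure_inter (μ : Measure α)
    {A : ℕ → Set α} (hA : ∀ i, MeasurableSet (A i)) (n : ℕ) :
    ∑ i ∈ Finset.range n, μ (A i) ≤
      μ (⋃ i ∈ Finset.range n, A i) +
        ∑ i ∈ Finset.range n, ∑ j ∈ Finset.range i, μ (A j ∩ A i) := by
  induction n with
  | zero => simp
  | succ n ih =>
    set U := ⋃ i ∈ Finset.range n, A i
    have hU : ⋃ i ∈ Finset.range (n + 1), A i = U ∪ A n := by
      rw [Finset.range_add_one, Finset.set_biUnion_insert, union_comm]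
    have hoverlap : μ (U ∩ A n) ≤ ∑ j ∈ Finset.range n, μ (A j ∩ A n) := by
      rw [iUnion₂_inter]
      exact measure_biUnion_finset_le _ _
    calc ∑ i ∈ Finset.range (n + 1), μ (A i)
        ≤ μ U + ∑ i ∈ Finset.range n, ∑ j ∈ Finset.range i, μ (A j ∩ A i) + μ (A n) := by
          rw [Finset.sum_range_succ]; gcongr
      _ = μ (U ∪ A n) + μ (U ∩ A n) +
            ∑ i ∈ Finset.range n, ∑ j ∈ Finset.range i, μ (A j ∩ A i) := by
          rw [measure_union_add_inter _ (hA n)]; ring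
      _ ≤ μ (U ∪ A n) + ∑ j ∈ Finset.range n, μ (A j ∩ A n) +
            ∑ i ∈ Finset.range n, ∑ j ∈ Finset.range i, μ (A j ∩ A i) := by gcongr
      _ = _ := by rw [hU, Finset.sum_range_succ]; ring

theorem tendsto_measure_setOf_lt_atTop (μ : Measure α) [IsFiniteMeasure μ] {X : α → ℝ}
    (hX : Measurable X) : Tendsto (fun x => μ {a | x < X a}) atTop (𝓝 0) := by
  have hempty : ⋂ x : ℝ, {a | x < X a} = ∅ :=
    eq_empty_of_forall_notMem fun a ha => lt_irrefl (X a) (mem_iInter.1 ha (X a))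
  simpa [hempty, Function.comp_def] using
    tendsto_measure_iInter_atTop (μ := μ) (s := fun x : ℝ => {a | x < X a})
    (fun x => (hX measurableSet_Ioi).nullMeasurableSet)
    (fun x y hxy a (ha : y < X a) => hxy.trans_lt ha) ⟨0, measure_ne_top μ _⟩

theorem lintegral_natCast_eq_tsum (μ : Measure α) {τ : α → ℕ} (hτ : Measurable τ) :
    ∫⁻ a, (τ a : ℝ≥0∞) ∂μ = ∑' n : ℕ, n * μ {a | τ a = n} := by
  rw [← lintegral_map measurable_from_top hτ, lintegral_countable']
  refine tsum_congr fun n => ?_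
  rw [Measure.map_apply hτ (measurableSet_singleton n)]
  rfl

end MeasureTheory

section RandomSum

lemma setOf_eq_preimage_natCast {Ω : Type*} (τ : Ω → ℕ) (n : ℕ) :
    {ω | τ ω = n} = (fun ω => (τ ω : ℝ)) ⁻¹' {(n : ℝ)} := by
  ext; simp

variable {Ω : Type*} [MeasurableSpace Ω] {P : Measure Ω} {ξ : ℕ → Ω → ℝ} {τ : Ω → ℕ}

lemma measure_restrict_setOf_lt_eq_mul (hξmeas : ∀ i, Measurable (ξ i))
    (hident : ∀ i, IdentDistrib (ξ i) (ξ 0) P P)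
    (hindep : iIndepFun (Sum.elim ξ (fun _ ω => (τ ω : ℝ)) : ℕ ⊕ Unit → Ω → ℝ) P)
    (n i : ℕ) (x : ℝ) :
    P.restrict {ω | τ ω = n} {ω | x < ξ i ω} = P {ω | τ ω = n} * P {ω | x < ξ 0 ω} := by
  have hA : MeasurableSet {ω | x < ξ i ω} := hξmeas i measurableSet_Ioi
  have hpair := (hindep.indepFun (Sum.inl_ne_inr (a := i) (b := ())))
    |>.measure_inter_preimage_eq_mul (Ioi x) {(n : ℝ)} measurableSet_Ioi (measurableSet_singleton _)
  simp only [Sum.elim_inl, Sum.elim_inr] at hpair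
  rw [Measure.restrict_apply hA, setOf_eq_preimage_natCast]
  refine hpair.trans ?_
  rw [(hident i).measure_mem_eq measurableSet_Ioi]
  exact mul_comm _ _

lemma measure_restrict_inter_setOf_lt_eq_mul (hξmeas : ∀ i, Measurable (ξ i))
    (hτmeas : Measurable τ) (hident : ∀ i, IdentDistrib (ξ i) (ξ 0) P P)
    (hindep : iIndepFun (Sum.elim ξ (fun _ ω => (τ ω : ℝ)) : ℕ ⊕ Unit → Ω → ℝ) P)
    {i j : ℕ} (hji : j ≠ i) (n : ℕ) (x : ℝ) :
    P.restrict {ω | τ ω = n} ({ω | x < ξ j ω} ∩ {ω | x < ξ i ω}) =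
      P {ω | τ ω = n} * P {ω | x < ξ 0 ω} ^ 2 := by
  have hmeas : ∀ k, Measurable ((Sum.elim ξ (fun _ ω => (τ ω : ℝ)) : ℕ ⊕ Unit → Ω → ℝ) k) := by
    rintro (k | -)
    exacts [hξmeas k, measurable_from_nat.comp hτmeas]
  have hpair := (hindep.indepFun (Sum.inl_injective.ne hji)).measure_inter_preimage_eq_mul
    (Ioi x) (Ioi x) measurableSet_Ioi measurableSet_Ioi
  have htriple := (hindep.indepFun_prodMk hmeas (.inl j) (.inl i) (.inr ()) Sum.inl_ne_inr
    Sum.inl_ne_inr).measure_inter_preimage_eq_mul (Ioi x ×ˢ Ioi x) {(n : ℝ)}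
    (measurableSet_Ioi.prod measurableSet_Ioi) (measurableSet_singleton _)
  simp only [Sum.elim_inl, Sum.elim_inr, mk_preimage_prod] at hpair htriple
  have hA : MeasurableSet ({ω | x < ξ j ω} ∩ {ω | x < ξ i ω}) :=
    (hξmeas j measurableSet_Ioi).inter (hξmeas i measurableSet_Ioi)
  rw [Measure.restrict_apply hA, setOf_eq_preimage_natCast]
  refine htriple.trans ?_
  rw [hpair, (hident i).measure_mem_eq measurableSet_Ioi,
    (hident j).measure_mem_eq measurableSet_Ioi, ← sq]
  exact mul_comm _ _

lemma natCast_mul_measure_mul_tail_le (hξmeas : ∀ i, Measurable (ξ i)) (hτmeas : Measurable τ)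
    (hξnonneg : ∀ i ω, 0 ≤ ξ i ω) (hident : ∀ i, IdentDistrib (ξ i) (ξ 0) P P)
    (hindep : iIndepFun (Sum.elim ξ (fun _ ω => (τ ω : ℝ)) : ℕ ⊕ Unit → Ω → ℝ) P)
    (n : ℕ) (x : ℝ) :
    n * (P {ω | τ ω = n} * P {ω | x < ξ 0 ω}) ≤
      P ({ω | τ ω = n} ∩ {ω | x < ∑ i ∈ Finset.range (τ ω), ξ i ω}) +
        n * n * (P {ω | τ ω = n} * P {ω | x < ξ 0 ω} ^ 2) := by
  set B := {ω | τ ω = n}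
  set A : ℕ → Set Ω := fun i => {ω | x < ξ i ω}
  have hA : ∀ i, MeasurableSet (A i) := fun i => hξmeas i measurableSet_Ioi
  have hunion : P.restrict B (⋃ i ∈ Finset.range n, A i) ≤
      P (B ∩ {ω | x < ∑ i ∈ Finset.range (τ ω), ξ i ω}) := by
    rw [Measure.restrict_apply (Finset.measurableSet_biUnion _ fun i _ => hA i), inter_comm]
    refine measure_mono fun ω ⟨(hτω : τ ω = n), hω⟩ => ⟨hτω, ?_⟩
    obtain ⟨i, hi, hξi⟩ := mem_iUnion₂.1 hω
    calc x < ξ i ω := hξi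
      _ ≤ ∑ j ∈ Finset.range (τ ω), ξ j ω :=
        Finset.single_le_sum (fun j _ => hξnonneg j ω) (hτω ▸ hi)
  have hpairs : ∑ i ∈ Finset.range n, ∑ j ∈ Finset.range i, P.restrict B (A j ∩ A i) ≤
      n * n * (P B * P (A 0) ^ 2) := by
    calc ∑ i ∈ Finset.range n, ∑ j ∈ Finset.range i, P.restrict B (A j ∩ A i)
        = ∑ i ∈ Finset.range n, ∑ j ∈ Finset.range i, P B * P (A 0) ^ 2 :=
          Finset.sum_congr rfl fun i _ => Finset.sum_congr rfl fun j hj =>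
            measure_restrict_inter_setOf_lt_eq_mul hξmeas hτmeas hident hindep
              (Finset.mem_range.1 hj).ne n x
      _ ≤ ∑ i ∈ Finset.range n, ∑ j ∈ Finset.range n, P B * P (A 0) ^ 2 :=
          Finset.sum_le_sum fun i hi => Finset.sum_le_sum_of_subset
            (Finset.range_subset_range.2 (Finset.mem_range.1 hi).le)
      _ = n * n * (P B * P (A 0) ^ 2) := by simp [mul_assoc]
  calc (n : ℝ≥0∞) * (P B * P (A 0))
      = ∑ i ∈ Finset.range n, P.restrict B (A i) := by
        simp [A, B, measure_restrict_setOf_lt_eq_mul hξmeas hident hindep]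
    _ ≤ P.restrict B (⋃ i ∈ Finset.range n, A i) +
          ∑ i ∈ Finset.range n, ∑ j ∈ Finset.range i, P.restrict B (A j ∩ A i) :=
        sum_measure_le_measure_biUnion_add_sum_measure_inter _ hA n
    _ ≤ _ := add_le_add hunion hpairs

lemma sum_natCast_mul_measure_mul_tail_le [IsProbabilityMeasure P]
    (hξmeas : ∀ i, Measurable (ξ i)) (hτmeas : Measurable τ)
    (hξnonneg : ∀ i ω, 0 ≤ ξ i ω) (hident : ∀ i, IdentDistrib (ξ i) (ξ 0) P P)
    (hindep : iIndepFun (Sum.elim ξ (fun _ ω => (τ ω : ℝ)) : ℕ ⊕ Unit → Ω → ℝ) P)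
    (N : ℕ) (x : ℝ) :
    (∑ n ∈ Finset.range N, n * P {ω | τ ω = n}) * P {ω | x < ξ 0 ω} ≤
      P {ω | x < ∑ i ∈ Finset.range (τ ω), ξ i ω} + N * N * P {ω | x < ξ 0 ω} ^ 2 := by
  set E := {ω | x < ∑ i ∈ Finset.range (τ ω), ξ i ω}
  set p := P {ω | x < ξ 0 ω}
  have hB : ∀ n, MeasurableSet {ω | τ ω = n} := fun n => hτmeas (measurableSet_singleton n)
  have hfibers : ∀ μ : Measure Ω, ∑ n ∈ Finset.range N, μ {ω | τ ω = n} ≤ μ univ := fun μ =>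
    (sum_measure_preimage_singleton _ fun n _ => hB n).trans_le
      (measure_mono (subset_univ _))
  calc (∑ n ∈ Finset.range N, n * P {ω | τ ω = n}) * p
      = ∑ n ∈ Finset.range N, n * (P {ω | τ ω = n} * p) := by
        simp only [Finset.sum_mul, mul_assoc]
    _ ≤ ∑ n ∈ Finset.range N,
          (P.restrict E {ω | τ ω = n} + N * N * (P {ω | τ ω = n} * p ^ 2)) := by
        refine Finset.sum_le_sum fun n hn => ?_
        rw [Measure.restrict_apply (hB n)]
        refine (natCast_mul_measure_mul_tail_le hξmeas hτmeas hξnonneg hident hindep n x).trans ?_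
        gcongr <;> exact (Finset.mem_range.1 hn).le
    _ = ∑ n ∈ Finset.range N, P.restrict E {ω | τ ω = n} +
          N * N * p ^ 2 * ∑ n ∈ Finset.range N, P {ω | τ ω = n} := by
        rw [Finset.sum_add_distrib, Finset.mul_sum]
        congr 1
        exact Finset.sum_congr rfl fun n _ => by ring
    _ ≤ P E + N * N * p ^ 2 :=
        add_le_add (by simpa using hfibers (P.restrict E))
          (mul_le_of_le_one_right zero_le (by simpa using hfibers P))

end RandomSum

/-- For i.i.d. nonnegative `ξ i` with distribution unbounded from the right and an
independent counting random variable `τ`,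
`liminf_{x→∞} P(S_τ > x)/P(ξ > x) ≥ E τ` (in `ℝ≥0∞`, so that the case `E τ = ∞` is
included). -/
theorem randomly_stopped_sums_liminf_ge
    {Ω : Type*} [MeasurableSpace Ω] (P : Measure Ω) [IsProbabilityMeasure P]
    (ξ : ℕ → Ω → ℝ) (τ : Ω → ℕ)
    (hξmeas : ∀ i, Measurable (ξ i)) (hτmeas : Measurable τ)
    (hξnonneg : ∀ i ω, 0 ≤ ξ i ω)
    (hident : ∀ i, IdentDistrib (ξ i) (ξ 0) P P)
    (hindep : iIndepFun
      (Sum.elim ξ (fun _ ω => (τ ω : ℝ)) : ℕ ⊕ Unit → Ω → ℝ) P)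
    (hunbounded : ∀ x : ℝ, 0 < P {ω | ξ 0 ω > x}) :
    ∫⁻ ω, (τ ω : ℝ≥0∞) ∂P ≤
      Filter.liminf (fun x : ℝ =>
        P {ω | (∑ i ∈ Finset.range (τ ω), ξ i ω) > x} / P {ω | ξ 0 ω > x}) atTop := by
  simp only [gt_iff_lt] at hunbounded ⊢
  rw [lintegral_natCast_eq_tsum P hτmeas, ENNReal.tsum_eq_iSup_nat]
  refine iSup_le fun N => ?_
  have hsmall : Tendsto (fun x => (N * N : ℝ≥0∞) * P {ω | x < ξ 0 ω}) atTop (𝓝 0) := by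
    simpa using ENNReal.Tendsto.const_mul
      (tendsto_measure_setOf_lt_atTop P (hξmeas 0)) (Or.inr (by finiteness))
  rw [← ENNReal.liminf_add_of_right_tendsto_zero hsmall]
  refine le_liminf_of_le (by isBoundedDefault) (.of_forall fun x => ?_)
  have hp0 : P {ω | x < ξ 0 ω} ≠ 0 := (hunbounded x).ne'
  have hptop : P {ω | x < ξ 0 ω} ≠ ∞ := measure_ne_top P _
  rw [← ENNReal.mul_le_mul_iff_left hp0 hptop, Pi.add_apply, add_mul,
    ENNReal.div_mul_cancel hp0 hptop]
  refine (sum_natCast_mul_measure_mul_tail_le hξmeas hτmeas hξnonneg hident hindep N x).trans_eq ?_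
  ring
end

section
/- Let ξ, ξ_1, ξ_2, … be i.i.d. nonnegative random variables with common distribution F unbounded from the right, Laplace transform φ and γ̂ = sup{γ : φ(γ) < ∞} ∈ (0,∞] with φ(γ̂) ∈ (1,∞], and let τ be an independent counting random variable with E φ(γ̂)^τ < ∞. Define G(du) = e^{γ̂ u} F(du)/φ(γ̂) and ν with P(ν = k) = φ(γ̂)^k P(τ = k)/E φ(γ̂)^τ. Then liminf_{x→∞} \bar{G^{*ν}}(x)/\bar G(x) ≥ (1/E φ(γ̂)^{τ−1}) · liminf_{x→∞} \bar{F^{*τ}}(x)/\bar F(x). -/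
open MeasureTheory ProbabilityTheory Filter Real Set
open scoped ENNReal

/-!
Tilting by `e^{γ̂u}` is multiplicative for convolution, so it maps `F^{*k}` to `φ(γ̂)^k G^{*k}`;
summing over `k` with weights `P(τ = k)` shows that `G^{*ν}` is `(E φ(γ̂)^τ)⁻¹` times the tilt of
`F^{*τ}`, while `G` is `φ(γ̂)⁻¹` times the tilt of `F`. As the weight `e^{γ̂u}` is increasing, the
layer-cake formula turns an eventual tail bound `c F̄ ≤ \bar{F^{*τ}}` into the same bound for the
tilted tails. It remains to note `φ(γ̂) / E φ(γ̂)^τ ≥ 1 / E φ(γ̂)^{τ-1}`. If `φ(γ̂) = ∞`, the moment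
condition forces `τ = 0` a.s. and the left-hand side vanishes.
-/

namespace MeasureTheory.Measure

noncomputable def convPow (μ : Measure ℝ) : ℕ → Measure ℝ
  | 0 => dirac 0
  | n + 1 => convPow μ n ∗ μ

/-- The law `μ^{*σ}` of a sum of `σ` i.i.d. `μ`-distributed summands, where `σ ∼ p` is
independent of them. -/
noncomputable def compound (p : Measure ℕ) (μ : Measure ℝ) : Measure ℝ :=
  sum fun k => p {k} • convPow μ k

/-- Unnormalised, unlike `Measure.tilted`, so that it makes sense when `∫ e^{γu} dμ = ∞`. -/
noncomputable def expTilt (γ : ℝ) (μ : Measure ℝ) : Measure ℝ :=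
  μ.withDensity fun u => ENNReal.ofReal (Real.exp (γ * u))

instance sFinite_convPow (μ : Measure ℝ) [SFinite μ] (n : ℕ) : SFinite (convPow μ n) := by
  induction n with
  | zero => exact inferInstanceAs (SFinite (dirac 0))
  | succ n ih => exact inferInstanceAs (SFinite (convPow μ n ∗ μ))

lemma compound_apply (p : Measure ℕ) (μ : Measure ℝ) {s : Set ℝ} (hs : MeasurableSet s) :
    compound p μ s = ∑' k, p {k} * convPow μ k s := by
  rw [compound, sum_apply _ hs]
  rfl

lemma eq_convPow {μ : Measure ℝ} {ν : ℕ → Measure ℝ} (h₀ : ν 0 = dirac 0)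
    (hsucc : ∀ n, ν (n + 1) = ν n ∗ μ) : ν = convPow μ := funext fun n => by
  induction n with
  | zero => exact h₀
  | succ n ih => rw [hsucc, ih, convPow]

variable {γ : ℝ}

instance sFinite_expTilt (μ : Measure ℝ) [SFinite μ] : SFinite (expTilt γ μ) :=
  inferInstanceAs (SFinite (μ.withDensity _))

lemma convPow_smul (a : ℝ≥0∞) (μ : Measure ℝ) [SFinite μ] (n : ℕ) :
    convPow (a • μ) n = a ^ n • convPow μ n := by
  induction n with
  | zero => simp [convPow]
  | succ n ih => rw [convPow, convPow, ih, conv_smul_left, conv_smul_right, smul_smul, pow_succ]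

lemma expTilt_conv (μ ν : Measure ℝ) [SFinite ν] :
    expTilt γ (μ ∗ ν) = expTilt γ μ ∗ expTilt γ ν := by
  have hE : Measurable fun u : ℝ => ENNReal.ofReal (Real.exp (γ * u)) := by fun_prop
  refine ext_of_lintegral _ fun f hf => ?_
  simp only [expTilt]
  rw [lintegral_withDensity_eq_lintegral_mul _ hE hf, lintegral_conv (hE.mul hf),
    lintegral_conv hf, lintegral_withDensity_eq_lintegral_mul _ hE (by fun_prop)]
  refine lintegral_congr fun x => ?_
  rw [Pi.mul_apply, lintegral_withDensity_eq_lintegral_mul _ hE (by fun_prop),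
    ← lintegral_const_mul _ (by fun_prop)]
  refine lintegral_congr fun y => ?_
  simp only [Pi.mul_apply, mul_add, Real.exp_add, ENNReal.ofReal_mul (Real.exp_pos _).le]
  ring

lemma expTilt_convPow (μ : Measure ℝ) [SFinite μ] (n : ℕ) :
    expTilt γ (convPow μ n) = convPow (expTilt γ μ) n := by
  induction n with
  | zero => simp [convPow, expTilt, dirac_withDensity]
  | succ n ih => rw [convPow, convPow, expTilt_conv, ih]

lemma compound_smul_expTilt {p q : Measure ℕ} {a c : ℝ≥0∞} (ha₀ : a ≠ 0) (ha : a ≠ ⊤)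
    (hq : ∀ k, q {k} = c * (a ^ k * p {k})) (μ : Measure ℝ) [SFinite μ] :
    compound q (a⁻¹ • expTilt γ μ) = c • expTilt γ (compound p μ) := by
  have hcancel : ∀ k : ℕ, a ^ k * a⁻¹ ^ k = 1 := fun k => by
    rw [← mul_pow, ENNReal.mul_inv_cancel ha₀ ha, one_pow]
  ext s hs
  simp only [compound, convPow_smul, ← expTilt_convPow]
  simp only [expTilt, withDensity_sum, withDensity_smul_measure, sum_apply _ hs, smul_apply,
    smul_eq_mul, hq, ← ENNReal.tsum_mul_left]
  refine tsum_congr fun k => ?_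
  rw [show ∀ T, c * (a ^ k * p {k}) * (a⁻¹ ^ k * T) = (a ^ k * a⁻¹ ^ k) * (c * (p {k} * T))
    from fun T => by ring, hcancel, one_mul]

lemma absolutelyContinuous_expTilt (μ : Measure ℝ) : μ ≪ expTilt γ μ :=
  withDensity_absolutelyContinuous' (by fun_prop)
    (ae_of_all _ fun _ => (ENNReal.ofReal_pos.2 (Real.exp_pos _)).ne')

lemma expTilt_Ioi_eq_lintegral (hγ : 0 < γ) (μ : Measure ℝ) (x : ℝ) :
    expTilt γ μ (Ioi x) = ∫⁻ t in Ioi 0, μ (Ioi (max (Real.log t / γ) x)) := by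
  rw [expTilt, withDensity_apply _ measurableSet_Ioi, lintegral_eq_lintegral_meas_lt _
    (.of_forall fun u => (Real.exp_pos _).le) (by fun_prop)]
  refine setLIntegral_congr_fun measurableSet_Ioi fun t ht => ?_
  have hset : {u : ℝ | t < Real.exp (γ * u)} = Ioi (Real.log t / γ) := by
    ext u
    rw [mem_ofPred_eq, mem_Ioi, div_lt_iff₀ hγ, mul_comm, Real.log_lt_iff_lt_exp ht]
  rw [hset, restrict_apply measurableSet_Ioi, Ioi_inter_Ioi]

lemma mul_expTilt_Ioi_le (hγ : 0 < γ) {μ ν : Measure ℝ} {c : ℝ≥0∞} {x : ℝ}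
    (h : ∀ y, x ≤ y → c * ν (Ioi y) ≤ μ (Ioi y)) :
    c * expTilt γ ν (Ioi x) ≤ expTilt γ μ (Ioi x) := by
  rw [expTilt_Ioi_eq_lintegral hγ, expTilt_Ioi_eq_lintegral hγ]
  exact (lintegral_const_mul_le _ _).trans (lintegral_mono fun t => h _ (le_max_right _ _))

lemma liminf_div_Ioi_le_liminf_expTilt (hγ : 0 < γ) (μ ν : Measure ℝ)
    [IsFiniteMeasure (expTilt γ ν)] (hν : ∀ x, ν (Ioi x) ≠ 0) :
    liminf (fun x => μ (Ioi x) / ν (Ioi x)) atTop ≤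
      liminf (fun x => expTilt γ μ (Ioi x) / expTilt γ ν (Ioi x)) atTop := by
  refine le_of_forall_lt_imp_le_of_dense fun c hc => ?_
  obtain ⟨x₀, hx₀⟩ := eventually_atTop.1 (eventually_lt_of_lt_liminf hc)
  refine le_liminf_of_le (by isBoundedDefault) (eventually_atTop.2 ⟨x₀, fun x hx => ?_⟩)
  have hpos : expTilt γ ν (Ioi x) ≠ 0 := fun h => hν x (absolutelyContinuous_expTilt ν h)
  rw [ENNReal.le_div_iff_mul_le (.inl hpos) (.inl (measure_ne_top _ _))]
  exact mul_expTilt_Ioi_le hγ fun y hy => ENNReal.mul_le_of_le_div (hx₀ y (hx.trans hy)).le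

end MeasureTheory.Measure

namespace ProbabilityTheory

open Measure

variable {Ω : Type*} [MeasurableSpace Ω] {P : Measure Ω}

lemma iIndepFun.indepFun_sum_range_sumElim {ι : Type*} {X : ℕ → Ω → ℝ} {Y : ι → Ω → ℝ}
    (h : iIndepFun (Sum.elim X Y) P) (hX : ∀ i, Measurable (X i)) (hY : ∀ j, Measurable (Y j))
    (n : ℕ) {j : ℕ ⊕ ι} (hj : ∀ i < n, Sum.inl i ≠ j) :
    IndepFun (∑ i ∈ Finset.range n, X i) (Sum.elim X Y j) P := by
  have hmeas : ∀ j, Measurable (Sum.elim X Y j) := by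
    rintro (i | i)
    exacts [hX i, hY i]
  simpa [Finset.sum_map] using h.indepFun_finsetSum_of_notMem hmeas
    (s := (Finset.range n).map Function.Embedding.inl) (by simpa using hj)

lemma measure_setOf_apply_index_mem {β : Type*} [MeasurableSpace β] {S : ℕ → Ω → β}
    {τ : Ω → ℕ} (hS : ∀ k, Measurable (S k)) (hτ : Measurable τ)
    (hind : ∀ k, IndepFun (S k) τ P) {s : Set β} (hs : MeasurableSet s) :
    P {ω | S (τ ω) ω ∈ s} = sum (fun k => P.map τ {k} • P.map (S k)) s := by
  have hτk : ∀ k, MeasurableSet (τ ⁻¹' {k}) := fun k => hτ (measurableSet_singleton k)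
  have hset : {ω | S (τ ω) ω ∈ s} = ⋃ k, τ ⁻¹' {k} ∩ S k ⁻¹' s := by
    ext ω
    simp
  rw [hset, measure_iUnion (fun i j hij => (Disjoint.preimage τ (by simpa using hij)).mono
    inter_subset_left inter_subset_left) fun k => (hτk k).inter (hS k hs), sum_apply _ hs]
  refine tsum_congr fun k => ?_
  rw [inter_comm, (hind k).measure_inter_preimage_eq_mul _ _ hs (measurableSet_singleton k),
    Measure.smul_apply, smul_eq_mul, map_apply hτ (measurableSet_singleton k), map_apply (hS k) hs,
    mul_comm]

variable [IsProbabilityMeasure P] {ξ : ℕ → Ω → ℝ}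

lemma map_sum_range_eq_convPow (hξ : ∀ i, Measurable (ξ i))
    (hident : ∀ i, IdentDistrib (ξ i) (ξ 0) P P)
    (hind : ∀ n, IndepFun (∑ i ∈ Finset.range n, ξ i) (ξ n) P) (n : ℕ) :
    P.map (∑ i ∈ Finset.range n, ξ i) = convPow (P.map (ξ 0)) n := by
  induction n with
  | zero =>
    rw [Finset.sum_range_zero, Pi.zero_def, Measure.map_const, measure_univ, one_smul, convPow]
  | succ n ih =>
    rw [Finset.sum_range_succ, (hind n).map_add_eq_map_conv_map
      (by fun_prop) (hξ n), ih, (hident n).map_eq, convPow]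

lemma measure_sum_range_index_mem (hξ : ∀ i, Measurable (ξ i)) {τ : Ω → ℕ} (hτ : Measurable τ)
    (hident : ∀ i, IdentDistrib (ξ i) (ξ 0) P P)
    (hindep : iIndepFun (Sum.elim ξ (fun _ ω => (τ ω : ℝ)) : ℕ ⊕ Unit → Ω → ℝ) P)
    {s : Set ℝ} (hs : MeasurableSet s) :
    P {ω | ∑ i ∈ Finset.range (τ ω), ξ i ω ∈ s} = compound (P.map τ) (P.map (ξ 0)) s := by
  have hindep' := hindep.indepFun_sum_range_sumElim hξ (fun _ => by fun_prop)
  have hτ_indep : ∀ n, IndepFun (∑ i ∈ Finset.range n, ξ i) τ P := fun n => by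
    simpa [Function.comp_def] using
      (hindep' n (j := .inr ()) (by simp)).comp measurable_id Nat.measurable_floor
  have h := measure_setOf_apply_index_mem (fun n => by fun_prop) hτ hτ_indep hs
  simp only [Finset.sum_apply] at h
  have hconv := map_sum_range_eq_convPow hξ hident
    fun n => hindep' n (j := .inl n) fun i hi => Sum.inl_injective.ne hi.ne
  rw [h, compound]
  simp only [hconv]

end ProbabilityTheory

section Counting

variable {Ω : Type*} [MeasurableSpace Ω] {P : Measure Ω} {τ : Ω → ℕ}

lemma map_withDensity_comp_apply_singleton (hτ : Measurable τ) (g : ℕ → ℝ≥0∞) (k : ℕ) :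
    (P.withDensity fun ω => g (τ ω)).map τ {k} = g k * P.map τ {k} := by
  have hk : MeasurableSet (τ ⁻¹' {k}) := hτ (measurableSet_singleton k)
  rw [Measure.map_apply hτ (measurableSet_singleton k), withDensity_apply _ hk,
    setLIntegral_congr_fun hk fun ω (hω : τ ω = k) => by rw [hω], setLIntegral_const,
    Measure.map_apply hτ (measurableSet_singleton k)]

lemma ae_eq_zero_of_lintegral_top_pow_ne_top (hτ : Measurable τ)
    (h : ∫⁻ ω, ⊤ ^ τ ω ∂P ≠ ⊤) : ∀ᵐ ω ∂P, τ ω = 0 := by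
  filter_upwards [ae_lt_top (measurable_from_nat.comp hτ) h] with ω hω
  by_contra hne
  exact hω.ne (ENNReal.top_pow hne)

lemma ENNReal.inv_mul_pow_le_pow_sub_one {a : ℝ≥0∞} (ha : 1 ≤ a) (n : ℕ) :
    a⁻¹ * a ^ n ≤ a ^ (n - 1) := by
  cases n with
  | zero => simpa using ENNReal.inv_le_one.2 ha
  | succ n =>
    rw [pow_succ', ← mul_assoc, Nat.add_sub_cancel]
    exact mul_le_of_le_one_left zero_le (ENNReal.inv_mul_le_one a)

lemma inv_lintegral_pow_sub_one_le {a : ℝ≥0∞} (ha : 1 ≤ a) (ha_top : a ≠ ⊤) :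
    (∫⁻ ω, a ^ (τ ω - 1) ∂P)⁻¹ ≤ (∫⁻ ω, a ^ τ ω ∂P)⁻¹ / a⁻¹ := by
  have h : a⁻¹ * ∫⁻ ω, a ^ τ ω ∂P ≤ ∫⁻ ω, a ^ (τ ω - 1) ∂P :=
    (lintegral_const_mul_le _ _).trans
      (lintegral_mono fun ω => ENNReal.inv_mul_pow_le_pow_sub_one ha _)
  rw [div_eq_mul_inv, ← ENNReal.mul_inv (.inr (ENNReal.inv_ne_top.2 (one_pos.trans_le ha).ne'))
    (.inr (ENNReal.inv_ne_zero.2 ha_top)), mul_comm]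
  exact ENNReal.inv_le_inv.2 h

lemma liminf_measure_sum_range_index_gt_div_eq_zero {ξ : ℕ → Ω → ℝ} (hτ0 : ∀ᵐ ω ∂P, τ ω = 0)
    (g : ℝ → ℝ≥0∞) :
    liminf (fun x => P {ω | (∑ i ∈ Finset.range (τ ω), ξ i ω) > x} / g x) atTop = 0 := by
  refine (liminf_congr ?_).trans (liminf_const 0)
  filter_upwards [eventually_ge_atTop 0] with x hx
  have hsub : {ω | (∑ i ∈ Finset.range (τ ω), ξ i ω) > x} ⊆ {ω | ¬τ ω = 0} :=
    fun ω (hω : _ > x) (h0 : τ ω = 0) => by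
      rw [h0, Finset.sum_range_zero] at hω
      linarith
  rw [measure_mono_null hsub (ae_iff.1 hτ0), ENNReal.zero_div]

end Counting

theorem tilted_liminf_inequality_general
    {Ω : Type*} [MeasurableSpace Ω] (P : Measure Ω) [IsProbabilityMeasure P]
    (ξ : ℕ → Ω → ℝ) (τ : Ω → ℕ)
    (hξmeas : ∀ i, Measurable (ξ i)) (hτmeas : Measurable τ)
    (hident : ∀ i, IdentDistrib (ξ i) (ξ 0) P P)
    (hindep : iIndepFun
      (Sum.elim ξ (fun _ ω => (τ ω : ℝ)) : ℕ ⊕ Unit → Ω → ℝ) P)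
    (hunbounded : ∀ x : ℝ, 0 < P {ω | ξ 0 ω > x})
    (φ : ℝ → ℝ≥0∞)
    (hφ : φ = fun γ => ∫⁻ ω, ENNReal.ofReal (Real.exp (γ * ξ 0 ω)) ∂P)
    (γhat : ℝ) (hγhat_pos : 0 < γhat)
    -- by monotone convergence, `φ(γ̂) = lim_{γ↑γ̂} φ γ` equals the value of `φ` at `γ̂`
    (φhat : ℝ≥0∞) (hφhat : φhat = φ γhat)
    (hφhat_gt_one : 1 < φhat)
    (hτmom : ∫⁻ ω, φhat ^ (τ ω) ∂P < ∞)
    -- the tilted distribution `G(du) = e^{γ̂u} F(du) / φ(γ̂)`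
    (G : Measure ℝ)
    (hG : G = φhat⁻¹ •
        (Measure.map (ξ 0) P).withDensity (fun u => ENNReal.ofReal (Real.exp (γhat * u))))
    -- the distribution of `ν`, `P(ν = k) = φ(γ̂)^k P(τ = k) / E φ(γ̂)^τ`
    (Pν : Measure ℕ)
    (hPν : Pν = (∫⁻ ω, φhat ^ (τ ω) ∂P)⁻¹ •
        Measure.map τ (P.withDensity (fun ω => φhat ^ (τ ω))))
    -- convolution powers of `G`
    (Gpow : ℕ → Measure ℝ)
    (hGpow_zero : Gpow 0 = Measure.dirac (0 : ℝ))
    (hGpow_succ : ∀ n : ℕ, Gpow (n + 1) = (Gpow n).conv G) :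
    (∫⁻ ω, φhat ^ (τ ω - 1) ∂P)⁻¹ *
        Filter.liminf (fun x : ℝ =>
          P {ω | (∑ i ∈ Finset.range (τ ω), ξ i ω) > x} / P {ω | ξ 0 ω > x}) atTop
      ≤ Filter.liminf (fun x : ℝ =>
          (∑' k : ℕ, Pν {k} * Gpow k (Set.Ioi x)) / G (Set.Ioi x)) atTop := by
  by_cases hφtop : φhat = ⊤
  · simp [liminf_measure_sum_range_index_gt_div_eq_zero
      (ae_eq_zero_of_lintegral_top_pow_ne_top hτmeas (hφtop ▸ hτmom.ne))]
  set F := P.map (ξ 0)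
  set c := ∫⁻ ω, φhat ^ τ ω ∂P
  have hφ0 : φhat ≠ 0 := (zero_lt_one.trans hφhat_gt_one).ne'
  have hF : ∀ x, P {ω | ξ 0 ω > x} = F (Ioi x) := fun x =>
    (Measure.map_apply (hξmeas 0) measurableSet_Ioi).symm
  have hLHS : ∀ x, P {ω | (∑ i ∈ Finset.range (τ ω), ξ i ω) > x} =
      (P.map τ).compound F (Ioi x) := fun x =>
    measure_sum_range_index_mem hξmeas hτmeas hident hindep measurableSet_Ioi
  have hPν' : ∀ k, Pν {k} = c⁻¹ * (φhat ^ k * P.map τ {k}) := fun k => by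
    rw [hPν, Measure.smul_apply, smul_eq_mul,
      map_withDensity_comp_apply_singleton hτmeas (fun k => φhat ^ k)]
  have hG' : G = φhat⁻¹ • F.expTilt γhat := hG
  have hRHS : ∀ x, (∑' k, Pν {k} * Gpow k (Ioi x)) / G (Ioi x) =
      c⁻¹ / φhat⁻¹ * (((P.map τ).compound F).expTilt γhat (Ioi x) / F.expTilt γhat (Ioi x)) :=
    fun x => by
      rw [Measure.eq_convPow hGpow_zero hGpow_succ, ← Measure.compound_apply _ _ measurableSet_Ioi,
        hG', Measure.compound_smul_expTilt hφ0 hφtop hPν', Measure.smul_apply,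
        Measure.smul_apply, smul_eq_mul, smul_eq_mul, ENNReal.mul_div_mul_comm
          (.inl (ENNReal.inv_ne_zero.2 hφtop)) (.inl (ENNReal.inv_ne_top.2 hφ0))]
  have hφF : F.expTilt γhat univ = φhat := by
    rw [hφhat, hφ, Measure.expTilt, withDensity_apply _ .univ, Measure.restrict_univ,
      lintegral_map (by fun_prop) (hξmeas 0)]
  have : IsFiniteMeasure (F.expTilt γhat) := ⟨hφF ▸ lt_top_iff_ne_top.2 hφtop⟩
  simp only [hLHS, hF, hRHS]
  calc _ ≤ c⁻¹ / φhat⁻¹ * liminf (fun x =>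
        ((P.map τ).compound F).expTilt γhat (Ioi x) / F.expTilt γhat (Ioi x)) atTop :=
        mul_le_mul' (inv_lintegral_pow_sub_one_le hφhat_gt_one.le hφtop)
          (Measure.liminf_div_Ioi_le_liminf_expTilt hγhat_pos _ F
            fun x => hF x ▸ (hunbounded x).ne')
    _ = liminf (fun _ => c⁻¹ / φhat⁻¹) atTop * _ := by rw [liminf_const]
    _ ≤ _ := ENNReal.le_liminf_mul

/-- **Exponential tilting inequality (Lemma 3 of [DFK]).** With `G` the `γ̂`-tilted
distribution of `F` and `ν` the tilted counting variable `P(ν = k) ∝ φ(γ̂)^k P(τ = k)`,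
one has `liminf Ḡ^{*ν}(x)/Ḡ(x) ≥ (E φ(γ̂)^{τ-1})⁻¹ · liminf F̄^{*τ}(x)/F̄(x)`. -/
theorem tilted_liminf_inequality
    {Ω : Type*} [MeasurableSpace Ω] (P : Measure Ω) [IsProbabilityMeasure P]
    (ξ : ℕ → Ω → ℝ) (τ : Ω → ℕ)
    (hξmeas : ∀ i, Measurable (ξ i)) (hτmeas : Measurable τ)
    (hξnonneg : ∀ i ω, 0 ≤ ξ i ω)
    (hident : ∀ i, IdentDistrib (ξ i) (ξ 0) P P)
    (hindep : iIndepFun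
      (Sum.elim ξ (fun _ ω => (τ ω : ℝ)) : ℕ ⊕ Unit → Ω → ℝ) P)
    (hunbounded : ∀ x : ℝ, 0 < P {ω | ξ 0 ω > x})
    (φ : ℝ → ℝ≥0∞)
    (hφ : φ = fun γ => ∫⁻ ω, ENNReal.ofReal (Real.exp (γ * ξ 0 ω)) ∂P)
    (γhat : ℝ) (hγhat : IsLUB {γ : ℝ | φ γ < ∞} γhat) (hγhat_pos : 0 < γhat)
    -- by monotone convergence, `φ(γ̂) = lim_{γ↑γ̂} φ γ` equals the value of `φ` at `γ̂`
    (φhat : ℝ≥0∞) (hφhat : φhat = φ γhat)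
    (hφhat_gt_one : 1 < φhat)
    (hτmom : ∫⁻ ω, φhat ^ (τ ω) ∂P < ∞)
    -- the tilted distribution `G(du) = e^{γ̂u} F(du) / φ(γ̂)`
    (G : Measure ℝ)
    (hG : G = φhat⁻¹ •
        (Measure.map (ξ 0) P).withDensity (fun u => ENNReal.ofReal (Real.exp (γhat * u))))
    -- the distribution of `ν`, `P(ν = k) = φ(γ̂)^k P(τ = k) / E φ(γ̂)^τ`
    (Pν : Measure ℕ)
    (hPν : Pν = (∫⁻ ω, φhat ^ (τ ω) ∂P)⁻¹ •
        Measure.map τ (P.withDensity (fun ω => φhat ^ (τ ω))))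
    -- convolution powers of `G`
    (Gpow : ℕ → Measure ℝ)
    (hGpow_zero : Gpow 0 = Measure.dirac (0 : ℝ))
    (hGpow_succ : ∀ n : ℕ, Gpow (n + 1) = (Gpow n).conv G) :
    (∫⁻ ω, φhat ^ (τ ω - 1) ∂P)⁻¹ *
        Filter.liminf (fun x : ℝ =>
          P {ω | (∑ i ∈ Finset.range (τ ω), ξ i ω) > x} / P {ω | ξ 0 ω > x}) atTop
      ≤ Filter.liminf (fun x : ℝ =>
          (∑' k : ℕ, Pν {k} * Gpow k (Set.Ioi x)) / G (Set.Ioi x)) atTop :=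
  tilted_liminf_inequality_general P ξ τ hξmeas hτmeas hident hindep hunbounded φ hφ γhat hγhat_pos
    φhat hφhat hφhat_gt_one hτmom G hG Pν hPν Gpow hGpow_zero hGpow_succ
end
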